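/- arXiv:2011.14628 — 9 statements merged into one kernel-verified Lean document; each statement's English description precedes it below -/
import Mathlib

section
/- For every n > 0, \sum_{k=0}^{n} T(n,k) \cdot 2^{n-1-k} = \binom{2n-1}{n}, where terms with k = n contribute 0 (since T(n,n)=0, so the possibly fractional power never actually occurs; equivalently \sum_{k=0}^{n-1} T(n,k) 2^{n-1-k} = \binom{2n-1}{n}). -/
lemma closed_form
    (T : ℕ → ℕ → ℕ)
    (hT0 : ∀ n : ℕ, 0 < n → T n 0 = 1)
    (hTnn : ∀ n : ℕ, 0 < n → T n n = 0)
    (hrec : ∀ n k : ℕ, 1 < n → 0 < k → k < n → T n k = T n (k - 1) + T (n - 1) k) :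
    ∀ n j : ℕ, j + 1 ≤ n → T n (j + 1) + (n + j).choose j = (n + j).choose (j + 1) := by
  intro n
  induction n with
  | zero => omega
  | succ n ih =>
    intro j
    induction j with
    | zero =>
      intro _
      rcases Nat.eq_zero_or_pos n with h0 | h0
      · subst h0
        simp [hTnn 1 (by norm_num)]
      · have hr : T (n + 1) 1 = T (n + 1) 0 + T n 1 := by
          simpa using hrec (n + 1) 1 (by omega) (by omega) (by omega)
        have h1 : T n 1 + n.choose 0 = n.choose 1 := by
          simpa using ih 0 (by omega)
        have h2 := hT0 (n + 1) (by omega)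
        show T (n + 1) 1 + (n + 1 + 0).choose 0 = (n + 1 + 0).choose 1
        simp only [Nat.add_zero, Nat.choose_zero_right, Nat.choose_one_right] at h1 ⊢
        omega
    | succ i ihj =>
      intro h
      show T (n + 1) (i + 2) + (n + 1 + (i + 1)).choose (i + 1)
          = (n + 1 + (i + 1)).choose (i + 2)
      rcases Nat.lt_or_ge (i + 2) (n + 1) with hlt | hge
      · have hr : T (n + 1) (i + 2) = T (n + 1) (i + 1) + T n (i + 2) := by
          simpa using hrec (n + 1) (i + 2) (by omega) (by omega) hlt
        have h1 : T (n + 1) (i + 1) + (n + 1 + i).choose i = (n + 1 + i).choose (i + 1) :=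
          ihj (by omega)
        have h2 : T n (i + 2) + (n + 1 + i).choose (i + 1) = (n + 1 + i).choose (i + 2) := by
          have := ih (i + 1) (by omega)
          rwa [show n + (i + 1) = n + 1 + i from by omega] at this
        have p1 : (n + 1 + (i + 1)).choose (i + 1)
            = (n + 1 + i).choose i + (n + 1 + i).choose (i + 1) := by
          rw [show n + 1 + (i + 1) = (n + 1 + i) + 1 from by omega]
          exact Nat.choose_succ_succ _ _
        have p2 : (n + 1 + (i + 1)).choose (i + 2)
            = (n + 1 + i).choose (i + 1) + (n + 1 + i).choose (i + 2) := by
          rw [show n + 1 + (i + 1) = (n + 1 + i) + 1 from by omega]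
          exact Nat.choose_succ_succ _ _
        omega
      · -- i + 2 = n + 1
        rw [show i + 2 = n + 1 from by omega, hTnn (n + 1) (by omega),
          show n + 1 + (i + 1) = 2 * n + 1 from by omega,
          show i + 1 = n from by omega]
        have hsymm : (2 * n + 1).choose (2 * n + 1 - (n + 1)) = (2 * n + 1).choose (n + 1) :=
          Nat.choose_symm (by omega)
        rw [show 2 * n + 1 - (n + 1) = n from by omega] at hsymm
        omega

lemma binom_step (n : ℕ) (hn : 1 ≤ n) :
    (2 * n + 1).choose (n + 1) + (2 * n).choose n
      = 4 * (2 * n - 1).choose n + (2 * n).choose (n - 1) := by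
  have h1 : (2 * n + 1).choose (n + 1) = (2 * n).choose n + (2 * n).choose (n + 1) :=
    Nat.choose_succ_succ _ _
  have h2 : (2 * n).choose (n + 1) = (2 * n).choose (n - 1) := by
    have := Nat.choose_symm (n := 2 * n) (k := n + 1) (by omega)
    rw [show 2 * n - (n + 1) = n - 1 from by omega] at this
    exact this.symm
  have h3 : (2 * n).choose n = (2 * n - 1).choose (n - 1) + (2 * n - 1).choose n := by
    have := Nat.choose_succ_succ (2 * n - 1) (n - 1)
    simp only [Nat.succ_eq_add_one] at this
    rwa [show 2 * n - 1 + 1 = 2 * n from by omega, show n - 1 + 1 = n from by omega] at this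
  have h4 : (2 * n - 1).choose (n - 1) = (2 * n - 1).choose n := by
    have := Nat.choose_symm (n := 2 * n - 1) (k := n) (by omega)
    rwa [show 2 * n - 1 - n = n - 1 from by omega] at this
  omega

theorem catalan_triangle_weighted_row_sum
    (T : ℕ → ℕ → ℕ)
    (hT00 : T 0 0 = 1)
    (hT0 : ∀ n : ℕ, 0 < n → T n 0 = 1)
    (hTnn : ∀ n : ℕ, 0 < n → T n n = 0)
    (hrec : ∀ n k : ℕ, 1 < n → 0 < k → k < n → T n k = T n (k - 1) + T (n - 1) k) :
    ∀ n : ℕ, 0 < n →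
      ∑ k ∈ Finset.range n, T n k * 2 ^ (n - 1 - k) = (2 * n - 1).choose n := by
  intro n hn
  induction n, hn using Nat.le_induction with
  | base => simp [hT0 1 (by norm_num)]
  | succ n hn ih =>
    have eq1 : ∑ k ∈ Finset.range (n + 1), T (n + 1) k * 2 ^ (n + 1 - 1 - k)
        = (∑ i ∈ Finset.range n, T (n + 1) i * 2 ^ (n - 1 - i))
          + (∑ i ∈ Finset.range n, T n (i + 1) * 2 ^ (n - 1 - i)) + 2 ^ n := by
      rw [Finset.sum_range_succ']
      have e0 : T (n + 1) 0 * 2 ^ (n + 1 - 1 - 0) = 2 ^ n := by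
        rw [hT0 (n + 1) (by omega)]; norm_num
      rw [e0, ← Finset.sum_add_distrib]
      congr 1
      apply Finset.sum_congr rfl
      intro i hi
      have hi' : i < n := Finset.mem_range.mp hi
      have hr : T (n + 1) (i + 1) = T (n + 1) i + T n (i + 1) := by
        simpa using hrec (n + 1) (i + 1) (by omega) (by omega) (by omega)
      rw [hr, show n + 1 - 1 - (i + 1) = n - 1 - i from by omega, add_mul]
    have eq2 : ∑ k ∈ Finset.range (n + 1), T (n + 1) k * 2 ^ (n + 1 - 1 - k)
        = 2 * (∑ i ∈ Finset.range n, T (n + 1) i * 2 ^ (n - 1 - i)) + T (n + 1) n := by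
      rw [Finset.sum_range_succ, show n + 1 - 1 - n = 0 from by omega, pow_zero, mul_one]
      congr 1
      rw [Finset.mul_sum]
      apply Finset.sum_congr rfl
      intro i hi
      have hi' : i < n := Finset.mem_range.mp hi
      rw [show n + 1 - 1 - i = (n - 1 - i) + 1 from by omega, pow_succ]
      ring
    have eq3 : 2 * ∑ k ∈ Finset.range n, T n k * 2 ^ (n - 1 - k)
        = (∑ i ∈ Finset.range n, T n (i + 1) * 2 ^ (n - 1 - i)) + 2 ^ n := by
      obtain ⟨m, rfl⟩ : ∃ m, n = m + 1 := ⟨n - 1, by omega⟩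
      rw [Finset.sum_range_succ' (fun k => T (m + 1) k * 2 ^ (m + 1 - 1 - k)) m]
      rw [Finset.sum_range_succ (fun i => T (m + 1) (i + 1) * 2 ^ (m + 1 - 1 - i)) m]
      rw [hT0 (m + 1) (by omega), hTnn (m + 1) (by omega)]
      simp only [one_mul, zero_mul, add_zero, Nat.add_sub_cancel, Nat.sub_zero]
      rw [mul_add, Finset.mul_sum]
      congr 1
      · apply Finset.sum_congr rfl
        intro i hi
        have hi' : i < m := Finset.mem_range.mp hi
        rw [show m - i = (m - (i + 1)) + 1 from by omega, pow_succ]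
        ring
      · rw [pow_succ]; ring
    have hc : T (n + 1) n + (2 * n).choose (n - 1) = (2 * n).choose n := by
      have := closed_form T hT0 hTnn hrec (n + 1) (n - 1) (by omega)
      rwa [show n - 1 + 1 = n from by omega, show n + 1 + (n - 1) = 2 * n from by omega] at this
    have hb := binom_step n hn
    rw [show 2 * (n + 1) - 1 = 2 * n + 1 from by omega]
    omega
end

section
/- For all p, q, n with n \ge 1 and q \ge 1: A_n(p,q) = A_n(p,q-1) + A_{n-1}(p, p+q-1), where A_n(p,q) = \frac{q}{pn+q}\binom{pn+q}{n} and A_n(p,0) = 0 for n \ge 1. -/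
/-- The Fuss-Catalan number `A_n(p,q) = q/(pn+q) * C(pn+q, n)`,
with the conventions `A_0(p,q) = 1` and `A_n(p,0) = 0` for `n > 0`. -/
def fussCatalan (p q n : ℕ) : ℚ :=
  if n = 0 then 1 else (q : ℚ) / (p * n + q) * ((p * n + q).choose n)

theorem fussCatalan_recurrence (p q n : ℕ) (hn : 1 ≤ n) (hq : 1 ≤ q) :
    fussCatalan p q n = fussCatalan p (q - 1) n + fussCatalan p (p + q - 1) (n - 1) := by
  obtain ⟨N, rfl⟩ : ∃ N, n = N + 1 := ⟨n - 1, by omega⟩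
  obtain ⟨Q, rfl⟩ : ∃ Q, q = Q + 1 := ⟨q - 1, by omega⟩
  have e1 : Q + 1 - 1 = Q := by omega
  have e2 : p + (Q + 1) - 1 = p + Q := by omega
  have e3 : N + 1 - 1 = N := by omega
  rw [e1, e2, e3]
  simp only [fussCatalan, Nat.succ_ne_zero, if_false]
  rcases Nat.eq_zero_or_pos N with rfl | hN
  · simp only [if_pos rfl]
    rcases Nat.eq_zero_or_pos (p + Q) with h | h
    · obtain ⟨rfl, rfl⟩ : p = 0 ∧ Q = 0 := by omega
      norm_num
    · have h2' : (Q : ℚ) + p ≠ 0 := by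
        have : (0:ℚ) < p + Q := by exact_mod_cast h
        intro hc; nlinarith
      have h1' : (Q : ℚ) + p + 1 ≠ 0 := by positivity
      rw [Nat.mul_one, Nat.choose_one_right, Nat.choose_one_right]
      push_cast
      field_simp [h2', h1']
      rw [mul_div_assoc, div_self (by intro hc; exact h2' (by linarith)), mul_one]
  · obtain ⟨K, rfl⟩ : ∃ K, N = K + 1 := ⟨N - 1, by omega⟩
    simp only [Nat.succ_ne_zero, if_false]
    have harg : p * (K + 1) + (p + Q) = p * (K + 1 + 1) + Q := by
      have : p * (K + 1 + 1) = p * (K + 1) + p * 1 := Nat.mul_add p (K + 1) 1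
      omega
    rw [harg]
    rcases Nat.eq_zero_or_pos (p * (K + 1 + 1) + Q) with h | h
    · obtain ⟨hp, hQ⟩ : p = 0 ∧ Q = 0 := by
        rcases Nat.mul_eq_zero.mp (by omega : p * (K + 1 + 1) = 0) with h' | h'
        · exact ⟨h', by omega⟩
        · omega
      subst hp hQ
      simp [Nat.choose_eq_zero_of_lt (by omega : 1 < K + 1 + 1)]
    · set M := p * (K + 1 + 1) + Q with hM
      have hM1 : p * (K + 1 + 1) + (Q + 1) = M + 1 := by omega
      rw [hM1]
      have hM0 : (M : ℚ) ≠ 0 := by exact_mod_cast h.ne'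
      have hM1' : (M : ℚ) + 1 ≠ 0 := by positivity
      have hm1 : ((p:ℚ) * (↑K + 1 + 1) + (↑Q + 1)) = (M : ℚ) + 1 := by
        rw [hM]; push_cast; ring
      have hm2 : ((p:ℚ) * (↑K + 1 + 1) + ↑Q) = (M : ℚ) := by
        rw [hM]; push_cast; ring
      have ha : (((M + 1).choose (K + 1 + 1) : ℕ) : ℚ)
          = (M.choose (K + 1 + 1) : ℚ) + (M.choose (K + 1) : ℚ) := by
        rw [Nat.choose_succ_succ]; push_cast; ring
      have hb : ((M : ℚ) + 1) * (M.choose (K + 1) : ℚ)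
          = ((M + 1).choose (K + 1 + 1) : ℚ) * ((K : ℚ) + 1 + 1) := by
        have := Nat.add_one_mul_choose_eq M (K + 1)
        exact_mod_cast this
      have hc : (M : ℚ) = (p : ℚ) * ((K : ℚ) + 1 + 1) + Q := by
        rw [hM]; push_cast; ring
      have hm3 : ((p:ℚ) * (↑K + 1) + (↑p + ↑Q)) = (M : ℚ) := by
        rw [hM]; push_cast; ring
      push_cast
      rw [hm1, hm2, hm3]
      field_simp
      linear_combination ((Q : ℚ) * ((M : ℚ) + 1)) * ha + (-(p : ℚ)) * hb +
        (((M + 1).choose (K + 1 + 1) : ℚ)) * hc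
end

section
/- For all nonnegative integers p, r, s and n: A_n(p, r+s) = \sum_{i=0}^{n} A_i(p,r) \cdot A_{n-i}(p,s). -/
open Finset

@[simp] lemma fussCatalan_zero (p q : ℕ) : fussCatalan p q 0 = 1 := if_pos rfl

lemma fussCatalan_zero_of_ne_zero (p : ℕ) {n : ℕ} (hn : n ≠ 0) : fussCatalan p 0 n = 0 := by
  simp [fussCatalan, hn]

-- The truncated `- 1` matters only when `p = q = 0`, where its term is multiplied by `p = 0`.
lemma fussCatalan_succ_eq_choose_sub_choose (p q n : ℕ) :
    fussCatalan p q (n + 1) =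
      (p * (n + 1) + q).choose (n + 1) - p * (p * (n + 1) + q - 1).choose n := by
  rcases hM : p * (n + 1) + q with _ | M
  · obtain ⟨rfl, rfl⟩ : p = 0 ∧ q = 0 := by simpa using hM
    simp [fussCatalan]
  · have hMQ : (p : ℚ) * (n + 1) + q = M + 1 := by exact_mod_cast hM
    have absorption : ((M + 1 : ℕ) : ℚ) * M.choose n = (M + 1).choose (n + 1) * (n + 1) := by
      exact_mod_cast Nat.add_one_mul_choose_eq M n
    simp only [fussCatalan, if_neg n.succ_ne_zero, hM, Nat.add_sub_cancel]
    push_cast at hMQ absorption ⊢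
    rw [hMQ]
    field_simp
    linear_combination (p : ℚ) * absorption + ((M + 1).choose (n + 1) : ℚ) * hMQ

lemma fussCatalan_one (p q : ℕ) : fussCatalan p q 1 = q := by
  simp [fussCatalan_succ_eq_choose_sub_choose]

lemma fussCatalan_succ_succ (p q n : ℕ) :
    fussCatalan p (q + 1) (n + 1) = fussCatalan p q (n + 1) + fussCatalan p (p + q) n := by
  rcases n with _ | m
  · simp [fussCatalan_one]
  · simp only [fussCatalan_succ_eq_choose_sub_choose]
    rcases hK : p * (m + 1 + 1) + q with _ | K
    · obtain ⟨rfl, rfl⟩ : p = 0 ∧ q = 0 := by simpa using hK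
      simp [Nat.choose_eq_zero_of_lt]
    · have h1 : p * (m + 1 + 1) + (q + 1) = K + 1 + 1 := by omega
      have h2 : p * (m + 1) + (p + q) = K + 1 := by linarith
      rw [h1, h2]
      simp only [Nat.add_sub_cancel, Nat.choose_succ_succ' (K + 1), Nat.choose_succ_succ' K]
      push_cast
      ring

lemma sum_range_fussCatalan_mul_fussCatalan_zero (p r n : ℕ) :
    ∑ i ∈ range (n + 1), fussCatalan p r i * fussCatalan p 0 (n - i) = fussCatalan p r n := by
  rw [sum_range_succ, sum_eq_zero, zero_add, Nat.sub_self, fussCatalan_zero, mul_one]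
  intro i hi
  rw [fussCatalan_zero_of_ne_zero p (by grind), mul_zero]

lemma sum_range_fussCatalan_mul_fussCatalan_succ (p r s m : ℕ) :
    ∑ i ∈ range (m + 2), fussCatalan p r i * fussCatalan p (s + 1) (m + 1 - i) =
      ∑ i ∈ range (m + 2), fussCatalan p r i * fussCatalan p s (m + 1 - i) +
        ∑ i ∈ range (m + 1), fussCatalan p r i * fussCatalan p (p + s) (m - i) := by
  simp only [sum_range_succ _ (m + 1), Nat.sub_self, fussCatalan_zero]
  rw [add_right_comm, ← sum_add_distrib]
  congr 1
  refine sum_congr rfl fun i hi => ?_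
  rw [Nat.sub_add_comm (by grind), fussCatalan_succ_succ, mul_add]

theorem fussCatalan_convolution (p r s n : ℕ) :
    fussCatalan p (r + s) n =
      ∑ i ∈ Finset.range (n + 1), fussCatalan p r i * fussCatalan p s (n - i) := by
  induction n generalizing r s with
  | zero => simp
  | succ m ih =>
    induction s with
    | zero => rw [add_zero, sum_range_fussCatalan_mul_fussCatalan_zero]
    | succ s ihs =>
      rw [sum_range_fussCatalan_mul_fussCatalan_succ, ← ihs, ← ih, ← add_assoc,
        fussCatalan_succ_succ, Nat.add_left_comm p r s]
end

section
/- For every n \ge 1, A_n(4,1) = \sum_{i=0}^{n-1} A_i(4,1) \cdot A_{n-1-i}(4,3). -/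
lemma fussCatalan_formula (q n : ℕ) (h : n ≠ 0 ∨ q ≠ 0) :
    fussCatalan 4 q n = (q : ℚ) / (4 * n + q) * ((4 * n + q).choose n) := by
  rcases eq_or_ne n 0 with rfl | hn
  · have hq : q ≠ 0 := h.resolve_left (by simp)
    have : (q : ℚ) ≠ 0 := by exact_mod_cast hq
    simp [fussCatalan, div_self this]
  · simp [fussCatalan, hn]

lemma fussCatalan_rec (q m : ℕ) :
    fussCatalan 4 (q+1) (m+1) = fussCatalan 4 q (m+1) + fussCatalan 4 (q+4) m := by
  rw [fussCatalan_formula _ _ (Or.inl (Nat.succ_ne_zero m)),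
      fussCatalan_formula _ _ (Or.inl (Nat.succ_ne_zero m)),
      fussCatalan_formula _ _ (Or.inr (by omega))]
  have e1 : 4 * (m+1) + (q+1) = (4*m+q+4) + 1 := by ring
  have e2 : 4 * (m+1) + q = 4*m+q+4 := by ring
  have e3 : 4 * m + (q+4) = 4*m+q+4 := by ring
  rw [e1, e2, e3, Nat.choose_succ_succ]
  have hR : ((4*m+q+4).choose (m+1) : ℚ) * (m+1) = ((4*m+q+4).choose m : ℚ) * (3*m+q+4) := by
    have := Nat.choose_succ_right_eq (4*m+q+4) m
    have hsub : 4*m+q+4 - m = 3*m+q+4 := by omega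
    rw [hsub] at this
    exact_mod_cast this
  push_cast
  generalize hg1 : (((4*m+q+4).choose m : ℕ) : ℚ) = X at hR ⊢
  generalize hg2 : (((4*m+q+4).choose (m+1) : ℕ) : ℚ) = Y at hR ⊢
  have hm1 : ((m:ℚ)+1) ≠ 0 := by positivity
  have hY : Y = X * (3*(m:ℚ)+q+4) / ((m:ℚ)+1) := by
    rw [eq_div_iff hm1]; linarith [hR]
  rw [hY]
  have hN : (4*(m:ℚ)+q+4) ≠ 0 := by positivity
  have hN1 : (4*(m:ℚ)+q+5) ≠ 0 := by positivity
  field_simp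
  ring

lemma fussCatalan_conv : ∀ n a c : ℕ,
    (∑ i ∈ Finset.range (n+1), fussCatalan 4 a i * fussCatalan 4 c (n - i))
      = fussCatalan 4 (a+c) n := by
  intro n
  induction n using Nat.strong_induction_on with
  | _ n ih =>
  intro a c
  induction c with
  | zero =>
      rw [Finset.sum_eq_single_of_mem n (Finset.self_mem_range_succ n)]
      · simp [fussCatalan]
      · intro i hi hne
        have h0 : n - i ≠ 0 := by
          simp only [Finset.mem_range] at hi; omega
        simp [fussCatalan, h0]
  | succ c ihc =>
      cases n with
      | zero => simp [fussCatalan]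
      | succ m =>
        have key : ∀ i ∈ Finset.range (m+1),
            fussCatalan 4 a i * fussCatalan 4 (c+1) (m+1-i)
              = fussCatalan 4 a i * fussCatalan 4 c (m+1-i)
                + fussCatalan 4 a i * fussCatalan 4 (c+4) (m-i) := by
          intro i hi
          simp only [Finset.mem_range] at hi
          have h1 : m+1-i = (m-i)+1 := by omega
          rw [h1, fussCatalan_rec, mul_add]
        rw [Finset.sum_range_succ, Finset.sum_congr rfl key, Finset.sum_add_distrib]
        have hA0 : fussCatalan 4 (c+1) ((m+1) - (m+1)) = fussCatalan 4 c ((m+1) - (m+1)) := by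
          simp [fussCatalan]
        rw [hA0]
        have step1 : (∑ i ∈ Finset.range (m+1), fussCatalan 4 a i * fussCatalan 4 c (m+1-i))
            + fussCatalan 4 a (m+1) * fussCatalan 4 c ((m+1)-(m+1))
            = fussCatalan 4 (a+c) (m+1) := by
          rw [← Finset.sum_range_succ]
          exact ihc
        have step2 : (∑ i ∈ Finset.range (m+1), fussCatalan 4 a i * fussCatalan 4 (c+4) (m-i))
            = fussCatalan 4 (a+(c+4)) m := ih m (Nat.lt_succ_self m) a (c+4)
        have step3 : fussCatalan 4 (a+(c+1)) (m+1)
            = fussCatalan 4 (a+c) (m+1) + fussCatalan 4 (a+c+4) m := by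
          have := fussCatalan_rec (a+c) m
          have e : a+(c+1) = (a+c)+1 := by ring
          rw [e]; exact this
        have e4 : a+(c+4) = a+c+4 := by ring
        rw [e4] at step2
        rw [step3, ← step1, ← step2]
        ring

theorem fussCatalan_four_one_convolution (n : ℕ) (hn : 1 ≤ n) :
    fussCatalan 4 1 n =
      ∑ i ∈ Finset.range n, fussCatalan 4 1 i * fussCatalan 4 3 (n - 1 - i) := by
  obtain ⟨m, rfl⟩ : ∃ m, n = m + 1 := ⟨n - 1, by omega⟩
  have hsub : ∀ i, m + 1 - 1 - i = m - i := by intro i; omega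
  simp only [hsub]
  have hconv := fussCatalan_conv m 1 3
  rw [hconv]
  have hrec := fussCatalan_rec 0 m
  have h0 : fussCatalan 4 0 (m+1) = 0 := by simp [fussCatalan]
  rw [h0] at hrec
  simpa using hrec
end

section
/- For every n > 0, \sum_{k=0}^{n} F(n,k) = A_n(4,1) = \frac{1}{4n+1}\binom{4n+1}{n}. -/
/-- The Fuss-Catalan triangle `F(n,k)`: `F(0,0)=1`, `F(n,n)=0` for `n>0`, and
`F(n,k) = ∑_{j=0}^{k} C(k-j+2,2) * F(n-1,j)` for `n>0`, `0 ≤ k < n`. -/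
def F : ℕ → ℕ → ℕ
  | 0, k => if k = 0 then 1 else 0
  | n + 1, k =>
    if k = n + 1 then 0
    else ∑ j ∈ Finset.range (k + 1), (k - j + 2).choose 2 * F n j

/-- closed form for the triangle -/
noncomputable def G (n k : ℕ) : ℚ :=
  4 * ((3*n + k - 1).choose k : ℚ) - 3 * ((3*n + k).choose k : ℚ)

lemma choose2_succ (m : ℕ) : (m+1).choose 2 = m.choose 2 + m := by
  show (m+1).choose (1+1) = m.choose (1+1) + m
  rw [Nat.choose_succ_succ, Nat.choose_one_right, Nat.add_comm]

lemma hockey1 (a k : ℕ) :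
    ∑ j ∈ Finset.range (k+1), (a+j).choose j = (a+k+1).choose k := by
  induction k with
  | zero => simp
  | succ k ih =>
    rw [Finset.sum_range_succ, ih]
    have h1 : a + (k+1) = a + k + 1 := by omega
    rw [h1]
    exact (Nat.choose_succ_succ _ _).symm

lemma hockey2 (a k : ℕ) :
    ∑ j ∈ Finset.range (k+1), (k+1-j) * (a+j).choose j = (a+k+2).choose k := by
  induction k with
  | zero => simp
  | succ k ih =>
    rw [Finset.sum_range_succ]
    have hlast : (k+1+1-(k+1)) * (a+(k+1)).choose (k+1) = (a+k+1).choose (k+1) := by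
      have h1 : k+1+1-(k+1) = 1 := by omega
      have h2 : a+(k+1) = a+k+1 := by omega
      rw [h1, h2, one_mul]
    rw [hlast]
    have hsplit : ∑ j ∈ Finset.range (k+1), (k+1+1-j) * (a+j).choose j
        = (∑ j ∈ Finset.range (k+1), (k+1-j) * (a+j).choose j)
          + ∑ j ∈ Finset.range (k+1), (a+j).choose j := by
      rw [← Finset.sum_add_distrib]
      apply Finset.sum_congr rfl
      intro j hj
      have hj' : j ≤ k := by simpa [Nat.lt_succ_iff] using hj
      have hc : k+1+1-j = (k+1-j)+1 := by omega
      rw [hc, add_mul, one_mul]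
    rw [hsplit, ih, hockey1]
    have p1 : (a+k+1+1).choose (k+1) = (a+k+1).choose k + (a+k+1).choose (k+1) :=
      Nat.choose_succ_succ _ _
    have e1 : a+(k+1)+2 = a+k+1+1+1 := by omega
    rw [e1]
    have p2 : (a+k+1+1+1).choose (k+1) = (a+k+1+1).choose k + (a+k+1+1).choose (k+1) :=
      Nat.choose_succ_succ _ _
    have e2 : a+k+2 = a+k+1+1 := by omega
    rw [e2]
    omega

lemma conv (a k : ℕ) :
    ∑ j ∈ Finset.range (k+1), (k - j + 2).choose 2 * (a+j).choose j
      = (a+k+3).choose k := by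
  induction k with
  | zero => simp
  | succ k ih =>
    rw [Finset.sum_range_succ]
    have hlast : (k+1-(k+1)+2).choose 2 * (a+(k+1)).choose (k+1)
        = (a+k+1).choose (k+1) := by
      have h1 : k+1-(k+1)+2 = 2 := by omega
      have h2 : a+(k+1) = a+k+1 := by omega
      rw [h1, h2, Nat.choose_self, one_mul]
    rw [hlast]
    have hsplit : ∑ j ∈ Finset.range (k+1), (k+1-j+2).choose 2 * (a+j).choose j
        = (∑ j ∈ Finset.range (k+1), (k-j+2).choose 2 * (a+j).choose j)
          + ((∑ j ∈ Finset.range (k+1), (k+1-j) * (a+j).choose j)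
          + ∑ j ∈ Finset.range (k+1), (a+j).choose j) := by
      rw [← Finset.sum_add_distrib, ← Finset.sum_add_distrib]
      apply Finset.sum_congr rfl
      intro j hj
      have hj' : j ≤ k := by simpa [Nat.lt_succ_iff] using hj
      have hc : (k+1-j+2).choose 2 = (k-j+2).choose 2 + ((k+1-j) + 1) := by
        have c1 : k+1-j+2 = (k-j+2)+1 := by omega
        rw [c1, choose2_succ]
        omega
      rw [hc, add_mul, add_mul, one_mul]
    rw [hsplit, ih, hockey2, hockey1]
    have e1 : a+(k+1)+3 = a+k+1+1+1+1 := by omega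
    have e2 : a+k+3 = a+k+1+1+1 := by omega
    have e3 : a+k+2 = a+k+1+1 := by omega
    rw [e1, e2, e3]
    have p1 : (a+k+1+1).choose (k+1) = (a+k+1).choose k + (a+k+1).choose (k+1) :=
      Nat.choose_succ_succ _ _
    have p2 : (a+k+1+1+1).choose (k+1) = (a+k+1+1).choose k + (a+k+1+1).choose (k+1) :=
      Nat.choose_succ_succ _ _
    have p3 : (a+k+1+1+1+1).choose (k+1) = (a+k+1+1+1).choose k + (a+k+1+1+1).choose (k+1) :=
      Nat.choose_succ_succ _ _
    omega

lemma G_diag (n : ℕ) : G (n+1) (n+1) = 0 := by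
  unfold G
  have e1 : 3*(n+1) + (n+1) - 1 = 4*n+3 := by omega
  have e2 : 3*(n+1) + (n+1) = 4*n+4 := by omega
  rw [e1, e2]
  have key : 4 * (4*n+3).choose (n+1) = 3 * (4*n+4).choose (n+1) := by
    have h := Nat.choose_mul_succ_eq (4*n+3) (n+1)
    have e3 : 4*n+3+1 = 4*n+4 := by omega
    have e4 : 4*n+4-(n+1) = 3*n+3 := by omega
    rw [e3, e4] at h
    apply Nat.eq_of_mul_eq_mul_right (show 0 < n+1 by omega)
    calc 4 * (4*n+3).choose (n+1) * (n+1)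
        = (4*n+3).choose (n+1) * (4*n+4) := by ring
      _ = (4*n+4).choose (n+1) * (3*n+3) := h
      _ = 3 * (4*n+4).choose (n+1) * (n+1) := by ring
  have keyq : (4:ℚ) * ((4*n+3).choose (n+1) : ℚ) = 3 * ((4*n+4).choose (n+1) : ℚ) := by
    exact_mod_cast key
  linarith

lemma F_eq_G (n : ℕ) : ∀ k ≤ n, (F n k : ℚ) = G n k := by
  induction n with
  | zero =>
    intro k hk
    interval_cases k
    norm_num [F, G]
  | succ n ih =>
    intro k hk
    by_cases hkn : k = n+1
    · subst hkn
      have h0 : F (n+1) (n+1) = 0 := by simp [F]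
      rw [h0, G_diag]
      exact Nat.cast_zero
    · have hk' : k ≤ n := by omega
      have hF : F (n+1) k = ∑ j ∈ Finset.range (k+1), (k - j + 2).choose 2 * F n j := by
        simp [F, hkn]
      rw [hF]
      push_cast
      have hterm : ∀ j ∈ Finset.range (k+1),
          ((k-j+2).choose 2 : ℚ) * (F n j : ℚ) = ((k-j+2).choose 2 : ℚ) * G n j := by
        intro j hj
        have hjn : j ≤ n := by
          have : j ≤ k := by simpa [Nat.lt_succ_iff] using hj
          omega
        rw [ih j hjn]
      rw [Finset.sum_congr rfl hterm]
      rcases Nat.eq_zero_or_pos n with hn0 | hn0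
      · subst hn0
        interval_cases k
        norm_num [G]
      · unfold G
        have c1 : (∑ j ∈ Finset.range (k+1),
            ((k-j+2).choose 2 : ℚ) * ((3*n-1+j).choose j : ℚ))
            = ((3*n-1+k+3).choose k : ℚ) := by
          exact_mod_cast congrArg (Nat.cast : ℕ → ℚ) (conv (3*n-1) k)
        have c2 : (∑ j ∈ Finset.range (k+1),
            ((k-j+2).choose 2 : ℚ) * ((3*n+j).choose j : ℚ))
            = ((3*n+k+3).choose k : ℚ) := by
          exact_mod_cast congrArg (Nat.cast : ℕ → ℚ) (conv (3*n) k)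
        have hexp : ∑ j ∈ Finset.range (k+1),
            ((k-j+2).choose 2 : ℚ) * (4 * ((3*n + j - 1).choose j : ℚ) - 3 * ((3*n + j).choose j : ℚ))
            = 4 * (∑ j ∈ Finset.range (k+1), ((k-j+2).choose 2 : ℚ) * ((3*n-1+j).choose j : ℚ))
              - 3 * (∑ j ∈ Finset.range (k+1), ((k-j+2).choose 2 : ℚ) * ((3*n+j).choose j : ℚ)) := by
          rw [Finset.mul_sum, Finset.mul_sum, ← Finset.sum_sub_distrib]
          apply Finset.sum_congr rfl
          intro j hj
          have e : 3*n + j - 1 = 3*n-1+j := by omega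
          rw [e]; ring
        rw [hexp, c1, c2]
        have e1 : 3*n-1+k+3 = 3*(n+1) + k - 1 := by omega
        have e2 : 3*n+k+3 = 3*(n+1) + k := by omega
        rw [e1, e2]

theorem F_row_sum (n : ℕ) (hn : 0 < n) :
    ∑ k ∈ Finset.range (n + 1), (F n k : ℚ) = fussCatalan 4 1 n := by
  have h1 : ∑ k ∈ Finset.range (n + 1), (F n k : ℚ)
      = ∑ k ∈ Finset.range (n+1), G n k := by
    apply Finset.sum_congr rfl
    intro k hk
    exact F_eq_G n k (by simpa [Nat.lt_succ_iff] using hk)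
  rw [h1]
  have c1 : (∑ k ∈ Finset.range (n+1), ((3*n-1+k).choose k : ℚ))
      = ((3*n-1+n+1).choose n : ℚ) := by
    exact_mod_cast congrArg (Nat.cast : ℕ → ℚ) (hockey1 (3*n-1) n)
  have c2 : (∑ k ∈ Finset.range (n+1), ((3*n+k).choose k : ℚ))
      = ((3*n+n+1).choose n : ℚ) := by
    exact_mod_cast congrArg (Nat.cast : ℕ → ℚ) (hockey1 (3*n) n)
  have h2 : ∑ k ∈ Finset.range (n+1), G n k
      = 4 * ((4*n).choose n : ℚ) - 3 * ((4*n+1).choose n : ℚ) := by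
    unfold G
    have hexp : ∑ k ∈ Finset.range (n+1),
        (4 * ((3*n + k - 1).choose k : ℚ) - 3 * ((3*n + k).choose k : ℚ))
        = 4 * (∑ k ∈ Finset.range (n+1), ((3*n-1+k).choose k : ℚ))
          - 3 * (∑ k ∈ Finset.range (n+1), ((3*n+k).choose k : ℚ)) := by
      rw [Finset.mul_sum, Finset.mul_sum, ← Finset.sum_sub_distrib]
      apply Finset.sum_congr rfl
      intro k hk
      have e : 3*n + k - 1 = 3*n-1+k := by omega
      rw [e]
    rw [hexp, c1, c2]
    have e1 : 3*n-1+n+1 = 4*n := by omega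
    have e2 : 3*n+n+1 = 4*n+1 := by omega
    rw [e1, e2]
  rw [h2]
  have hcast : ((4*n).choose n : ℚ) * (4*(n:ℚ)+1) = ((4*n+1).choose n : ℚ) * (3*(n:ℚ)+1) := by
    have h := Nat.choose_mul_succ_eq (4*n) n
    have e4 : 4*n+1-n = 3*n+1 := by omega
    rw [e4] at h
    exact_mod_cast h
  unfold fussCatalan
  rw [if_neg hn.ne']
  have hpos : (4:ℚ)*(n:ℚ)+1 ≠ 0 := by positivity
  push_cast
  field_simp
  linear_combination 4 * hcast
end

section
/- For every n > 0, \sum_{k=0}^{n} F(n,k) \binom{n-k+3}{3} = A_n(4,4) = \frac{4}{4n+4}\binom{4n+4}{n}. -/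
open Finset

/-- Hockey stick: sum of `C(a+j, j)` for `j ≤ k`. -/
lemma hockeyA (a : ℕ) : ∀ k : ℕ, ∑ j ∈ range (k+1), (a+j).choose j = (a+k+1).choose k := by
  intro k
  induction k with
  | zero => simp
  | succ k ih =>
      rw [sum_range_succ, ih]
      have h1 : a + (k+1) + 1 = (a + k + 1) + 1 := by omega
      have h2 : a + (k+1) = a + k + 1 := by omega
      rw [h1, h2, Nat.choose_succ_succ' (a+k+1) k]

/-- Hockey stick, bottom-index version. -/
lemma hockeyB (b : ℕ) : ∀ m : ℕ, ∑ i ∈ range (m+1), (i+b).choose b = (m+b+1).choose (b+1) := by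
  intro m
  have h : ∀ i : ℕ, (i+b).choose b = (b+i).choose i := by
    intro i
    have := Nat.choose_symm (n := b + i) (k := b) (by omega)
    simpa [Nat.add_sub_cancel_left, Nat.add_comm] using this.symm
  calc ∑ i ∈ range (m+1), (i+b).choose b
      = ∑ i ∈ range (m+1), (b+i).choose i := by
        exact Finset.sum_congr rfl (fun i _ => h i)
    _ = (b+m+1).choose m := hockeyA b m
    _ = (m+b+1).choose (b+1) := by
        have h1 : b + m + 1 = m + b + 1 := by omega
        rw [h1]
        have := Nat.choose_symm (n := m + b + 1) (k := b + 1) (by omega)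
        simpa [show m + b + 1 - (b+1) = m by omega] using this

/-- Triangle sum rearrangement. -/
lemma tri (f : ℕ → ℕ → ℕ) : ∀ k : ℕ,
    ∑ j ∈ range (k+1), ∑ i ∈ range (k - j + 1), f j i
      = ∑ m ∈ range (k+1), ∑ j ∈ range (m+1), f j (m - j) := by
  intro k
  induction k with
  | zero => simp
  | succ k ih =>
      rw [sum_range_succ (n := k+1), sum_range_succ (n := k+1)]
      have hL : ∑ j ∈ range (k+1), ∑ i ∈ range (k + 1 - j + 1), f j i
          = (∑ j ∈ range (k+1), ∑ i ∈ range (k - j + 1), f j i)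
            + ∑ j ∈ range (k+1), f j (k + 1 - j) := by
        rw [← Finset.sum_add_distrib]
        refine Finset.sum_congr rfl (fun j hj => ?_)
        have hjk : j ≤ k := by simpa [Nat.lt_succ_iff] using hj
        have h1 : k + 1 - j + 1 = (k - j + 1) + 1 := by omega
        rw [h1, sum_range_succ]
        have h2 : k - j + 1 = k + 1 - j := by omega
        rw [h2]
      rw [hL, ih]
      have h2 : ∑ i ∈ range (k + 1 - (k+1) + 1), f (k+1) i = f (k+1) (k + 1 - (k+1)) := by
        simp
      rw [h2]
      have h3 : ∑ j ∈ range (k+1+1), f j (k+1-j)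
          = (∑ j ∈ range (k+1), f j (k+1-j)) + f (k+1) (k+1-(k+1)) := by
        rw [sum_range_succ]
      rw [h3]
      ring

/-- Vandermonde-type convolution of binomial coefficients with fixed bottom indices. -/
lemma convV (b : ℕ) : ∀ (a k : ℕ),
    ∑ j ∈ range (k+1), (a+j).choose j * ((k - j + b).choose b) = (a+b+k+1).choose k := by
  induction b with
  | zero =>
      intro a k
      simp only [Nat.choose_zero_right, mul_one]
      simpa using hockeyA a k
  | succ b ih =>
      intro a k
      have step : ∀ j ∈ range (k+1),
          (a+j).choose j * ((k - j + (b+1)).choose (b+1))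
            = ∑ i ∈ range (k - j + 1), (a+j).choose j * ((i+b).choose b) := by
        intro j hj
        rw [← Finset.mul_sum, hockeyB b (k-j)]
        have h1 : k - j + (b+1) = k - j + b + 1 := by omega
        rw [h1]
      rw [Finset.sum_congr rfl step]
      rw [tri (fun j i => (a+j).choose j * ((i+b).choose b)) k]
      have inner : ∀ m ∈ range (k+1),
          ∑ j ∈ range (m+1), (a+j).choose j * ((m - j + b).choose b)
            = ((a+b+1)+m).choose m := by
        intro m _
        rw [ih a m]
        have h1 : a + b + m + 1 = a + b + 1 + m := by omega
        rw [h1]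
      rw [Finset.sum_congr rfl inner, hockeyA (a+b+1) k]
      have h1 : a + b + 1 + k + 1 = a + (b+1) + k + 1 := by omega
      rw [h1]

lemma F_zero : ∀ n : ℕ, F n 0 = 1 := by
  intro n
  induction n with
  | zero => simp [F]
  | succ n ih => simp [F, ih]

lemma F_diag (n : ℕ) : F (n+1) (n+1) = 0 := by simp [F]

lemma F_rec (n k : ℕ) (h : k ≠ n+1) :
    F (n+1) k = ∑ j ∈ range (k+1), (k - j + 2).choose 2 * F n j := by
  simp [F, h]

/-- Closed form, additive version: `F n (k+1) + 3*C(3n+k, k) = C(3n+k, k+1)`. -/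
lemma F_closed : ∀ n k : ℕ, k + 1 ≤ n →
    F n (k+1) + 3 * (3*n+k).choose k = (3*n+k).choose (k+1) := by
  intro n
  induction n with
  | zero => intro k hk; omega
  | succ m ih =>
      intro k hk
      rcases Nat.lt_or_ge (k+1) (m+1) with hlt | hge
      · -- k + 1 ≤ m
        have hkm : k + 1 ≤ m := by omega
        obtain ⟨m', rfl⟩ : ∃ m', m = m' + 1 := ⟨m - 1, by omega⟩
        rw [F_rec _ _ (by omega)]
        -- split off j = 0
        rw [Finset.sum_range_succ' (fun j => (k + 1 - j + 2).choose 2 * F (m'+1) j) (k+1)]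
        have hg0 : (k + 1 - 0 + 2).choose 2 * F (m'+1) 0 = (k+3).choose 2 := by
          rw [F_zero]; norm_num
        rw [hg0]
        have hterm : ∀ i ∈ range (k+1),
            (k + 1 - (i+1) + 2).choose 2 * F (m'+1) (i+1)
              = (k - i + 2).choose 2 * F (m'+1) (i+1) := by
          intro i hi
          have h1 : k + 1 - (i+1) = k - i := by omega
          rw [h1]
        rw [Finset.sum_congr rfl hterm]
        -- key sums
        have hV1 : ∑ i ∈ range (k+1), (3*(m'+1)+i).choose i * ((k - i + 2).choose 2)
            = (3*(m'+1)+2+k+1).choose k := convV 2 (3*(m'+1)) k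
        have hV2 : ∑ j ∈ range (k+2), (3*m'+2+j).choose j * ((k + 1 - j + 2).choose 2)
            = (3*m'+2+2+(k+1)+1).choose (k+1) := convV 2 (3*m'+2) (k+1)
        -- rewrite hV2 by splitting j = 0
        rw [Finset.sum_range_succ' (fun j => (3*m'+2+j).choose j * ((k + 1 - j + 2).choose 2)) (k+1)] at hV2
        have h20 : (3*m'+2+0).choose 0 * ((k + 1 - 0 + 2).choose 2) = (k+3).choose 2 := by
          norm_num
        rw [h20] at hV2
        have h2t : ∀ i ∈ range (k+1),
            (3*m'+2+(i+1)).choose (i+1) * ((k + 1 - (i+1) + 2).choose 2)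
              = (3*(m'+1)+i).choose (i+1) * ((k - i + 2).choose 2) := by
          intro i hi
          have h1 : 3*m'+2+(i+1) = 3*(m'+1)+i := by omega
          have h2 : k + 1 - (i+1) = k - i := by omega
          rw [h1, h2]
        rw [Finset.sum_congr rfl h2t] at hV2
        -- use induction hypothesis termwise
        have hIH : ∀ i ∈ range (k+1),
            F (m'+1) (i+1) + 3 * (3*(m'+1)+i).choose i = (3*(m'+1)+i).choose (i+1) := by
          intro i hi
          exact ih i (by simp [Nat.lt_succ_iff] at hi; omega)
        -- combine
        have key : ∑ i ∈ range (k+1), (k - i + 2).choose 2 * F (m'+1) (i+1)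
              + 3 * ∑ i ∈ range (k+1), (3*(m'+1)+i).choose i * ((k - i + 2).choose 2)
            = ∑ i ∈ range (k+1), (3*(m'+1)+i).choose (i+1) * ((k - i + 2).choose 2) := by
          rw [Finset.mul_sum, ← Finset.sum_add_distrib]
          refine Finset.sum_congr rfl (fun i hi => ?_)
          have := hIH i hi
          calc (k - i + 2).choose 2 * F (m'+1) (i+1)
                + 3 * ((3*(m'+1)+i).choose i * ((k - i + 2).choose 2))
              = (F (m'+1) (i+1) + 3 * (3*(m'+1)+i).choose i) * ((k - i + 2).choose 2) := by ring
            _ = (3*(m'+1)+i).choose (i+1) * ((k - i + 2).choose 2) := by rw [this]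
        have goal_eq : (3*(m'+1+1)+k).choose (k+1) = (3*m'+2+2+(k+1)+1).choose (k+1) := by
          congr 1; omega
        have hC : 3 * (3*(m'+1+1)+k).choose k = 3 * (3*(m'+1)+2+k+1).choose k := by
          congr 2; omega
        rw [goal_eq, hC, ← hV2, ← hV1]
        omega
      · -- k + 1 = m + 1
        have hk1 : k = m := by omega
        subst hk1
        rw [F_diag, zero_add]
        have h := Nat.choose_succ_right_eq (3*(k+1)+k) k
        have hsub : 3*(k+1)+k - k = 3*k+3 := by omega
        rw [hsub] at h
        apply Nat.eq_of_mul_eq_mul_right (show 0 < k + 1 by omega)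
        rw [h]
        ring

theorem F_weighted_row_sum (n : ℕ) (hn : 0 < n) :
    ∑ k ∈ Finset.range (n + 1), (F n k : ℚ) * ((n - k + 3).choose 3 : ℚ) =
      fussCatalan 4 4 n := by
  obtain ⟨m, rfl⟩ : ∃ m, n = m + 1 := ⟨n - 1, by omega⟩
  -- the main ℕ identity
  have hV3 : ∑ k ∈ range (m+2), (3*m+2+k).choose k * ((m + 1 - k + 3).choose 3)
      = (4*m+7).choose (m+1) := by
    have h := convV 3 (3*m+2) (m+1)
    have he : 3*m+2+3+(m+1)+1 = 4*m+7 := by omega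
    rwa [he] at h
  have hV4 : ∑ k ∈ range (m+1), (3*m+3+k).choose k * ((m - k + 3).choose 3)
      = (4*m+7).choose m := by
    have h := convV 3 (3*m+3) m
    have he : 3*m+3+3+m+1 = 4*m+7 := by omega
    rwa [he] at h
  have hM : (∑ k ∈ range (m+2), F (m+1) k * ((m + 1 - k + 3).choose 3))
        + 3 * (4*m+7).choose m = (4*m+7).choose (m+1) := by
    rw [Finset.sum_range_succ' (fun k => F (m+1) k * ((m + 1 - k + 3).choose 3)) (m+1)]
    have h0 : F (m+1) 0 * ((m + 1 - 0 + 3).choose 3) = (m+4).choose 3 := by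
      rw [F_zero]; norm_num
    rw [h0]
    have ht : ∀ i ∈ range (m+1),
        F (m+1) (i+1) * ((m + 1 - (i+1) + 3).choose 3)
          = F (m+1) (i+1) * ((m - i + 3).choose 3) := by
      intro i hi
      have h1 : m + 1 - (i+1) = m - i := by omega
      rw [h1]
    rw [Finset.sum_congr rfl ht]
    have hV4' : 3 * (4*m+7).choose m
        = 3 * ∑ k ∈ range (m+1), (3*m+3+k).choose k * ((m - k + 3).choose 3) := by
      rw [hV4]
    rw [hV4']
    have key : (∑ i ∈ range (m+1), F (m+1) (i+1) * ((m - i + 3).choose 3))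
          + 3 * ∑ k ∈ range (m+1), (3*m+3+k).choose k * ((m - k + 3).choose 3)
        = ∑ i ∈ range (m+1), (3*m+3+i).choose (i+1) * ((m - i + 3).choose 3) := by
      rw [Finset.mul_sum, ← Finset.sum_add_distrib]
      refine Finset.sum_congr rfl (fun i hi => ?_)
      have hcl := F_closed (m+1) i (by simp [Nat.lt_succ_iff] at hi; omega)
      calc F (m+1) (i+1) * ((m - i + 3).choose 3)
            + 3 * ((3*m+3+i).choose i * ((m - i + 3).choose 3))
          = (F (m+1) (i+1) + 3 * (3*(m+1)+i).choose i) * ((m - i + 3).choose 3) := by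
            have : 3*(m+1)+i = 3*m+3+i := by omega
            rw [this]; ring
        _ = (3*(m+1)+i).choose (i+1) * ((m - i + 3).choose 3) := by rw [hcl]
        _ = (3*m+3+i).choose (i+1) * ((m - i + 3).choose 3) := by
            have h5 : 3*(m+1)+i = 3*m+3+i := by omega
            rw [h5]
    -- now compare with hV3 split at j = 0
    rw [Finset.sum_range_succ' (fun k => (3*m+2+k).choose k * ((m + 1 - k + 3).choose 3)) (m+1)] at hV3
    have h30 : (3*m+2+0).choose 0 * ((m + 1 - 0 + 3).choose 3) = (m+4).choose 3 := by
      norm_num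
    rw [h30] at hV3
    have h3t : ∀ i ∈ range (m+1),
        (3*m+2+(i+1)).choose (i+1) * ((m + 1 - (i+1) + 3).choose 3)
          = (3*m+3+i).choose (i+1) * ((m - i + 3).choose 3) := by
      intro i hi
      have h1 : 3*m+2+(i+1) = 3*m+3+i := by omega
      have h2 : m + 1 - (i+1) = m - i := by omega
      rw [h1, h2]
    rw [Finset.sum_congr rfl h3t] at hV3
    rw [← hV3]
    omega
  -- ratio identity
  have h1 : (4*m+7).choose (m+1) * (m+1) = (4*m+7).choose m * (3*m+7) := by
    have h := Nat.choose_succ_right_eq (4*m+7) m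
    have hsub : 4*m+7 - m = 3*m+7 := by omega
    rwa [hsub] at h
  -- Pascal
  have hp : (4*(m+1)+4).choose (m+1) = (4*m+7).choose m + (4*m+7).choose (m+1) := by
    have : 4*(m+1)+4 = (4*m+7)+1 := by omega
    rw [this, Nat.choose_succ_succ' (4*m+7) m]
  -- pass to ℚ
  have hMq : (∑ k ∈ range (m+2), (F (m+1) k : ℚ) * (((m + 1 - k + 3).choose 3 : ℕ) : ℚ))
        + 3 * ((4*m+7).choose m : ℚ) = ((4*m+7).choose (m+1) : ℚ) := by
    exact_mod_cast congrArg (Nat.cast : ℕ → ℚ) hM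
  have h1q : ((4*m+7).choose (m+1) : ℚ) * (m+1) = ((4*m+7).choose m : ℚ) * (3*m+7) := by
    exact_mod_cast congrArg (Nat.cast : ℕ → ℚ) h1
  rw [fussCatalan]
  simp only [if_neg (Nat.succ_ne_zero m)]
  push_cast [hp]
  have hX : (4:ℚ) * (m+1) + 4 ≠ 0 := by positivity
  rw [div_mul_eq_mul_div, eq_div_iff hX]
  push_cast at hMq
  linear_combination ((4:ℚ)*m+8) * hMq + 4 * h1q
end

section
/- For every n > 0, F(n, n-1) = A_{n-1}(4,3) = \frac{3}{4(n-1)+3}\binom{4(n-1)+3}{n-1}. -/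
noncomputable def W (r n k : ℕ) : ℚ :=
  (3*(n:ℚ) - 3*k + r) / (3*n + k + r) * ((3*n + k + r).choose k)

lemma W_zero (r n : ℕ) (hn : 1 ≤ n) : W r n 0 = 1 := by
  unfold W
  have h1 : (1:ℚ) ≤ (n:ℚ) := by exact_mod_cast hn
  have h : (3*(n:ℚ) + 0 + r) ≠ 0 := by positivity
  simp only [Nat.cast_zero, Nat.choose_zero_right, Nat.cast_one, mul_one]
  rw [div_eq_one_iff_eq h]
  ring

lemma W_step (r n k : ℕ) (hk : k + 1 ≤ n) :
    W (r+1) n (k+1) = W (r+1) n k + W r n (k+1) := by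
  have hkN : k ≤ 3*n + (k+1) + r := by omega
  have hrel : ((3*n + (k+1) + r).choose (k+1) : ℚ) * (k+1)
      = ((3*n + (k+1) + r).choose k) * ((3*n + (k+1) + r : ℕ) - (k:ℚ)) := by
    have hc : (((3*n + (k+1) + r).choose (k+1)) * (k+1) : ℕ)
        = ((3*n + (k+1) + r).choose k) * ((3*n + (k+1) + r) - k) :=
      Nat.choose_succ_right_eq _ k
    have := congrArg (Nat.cast : ℕ → ℚ) hc
    push_cast [Nat.cast_sub hkN] at this
    push_cast
    linarith [this]
  have hpas : ((3*n + (k+1) + r + 1).choose (k+1) : ℚ)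
      = (3*n + (k+1) + r).choose k + (3*n + (k+1) + r).choose (k+1) := by
    rw [Nat.choose_succ_succ]; push_cast; ring
  have e1 : 3*n + (k+1) + (r+1) = 3*n + (k+1) + r + 1 := by omega
  have e2 : 3*n + k + (r+1) = 3*n + (k+1) + r := by omega
  have hN0 : (3*(n:ℚ) + (k+1) + r) ≠ 0 := by
    have h1 : (1:ℚ) ≤ (n:ℚ) := by exact_mod_cast hk.trans' (by omega)
    positivity
  have hN1 : (3*(n:ℚ) + (k+1) + r) + 1 ≠ 0 := by
    have h1 : (1:ℚ) ≤ (n:ℚ) := by exact_mod_cast hk.trans' (by omega)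
    positivity
  unfold W
  rw [e1, e2, hpas]
  push_cast
  push_cast at hrel
  field_simp
  linear_combination (4*(3*(n:ℚ)+k+r+1)) * hrel

/-- First summation: `∑_{j=0}^k W_r(n,j) = W_{r+1}(n,k)`. -/
lemma W_sum1 (r n k : ℕ) (hk : k ≤ n) (hn : 1 ≤ n) :
    ∑ j ∈ Finset.range (k+1), W r n j = W (r+1) n k := by
  induction k with
  | zero => simp [W_zero r n hn, W_zero (r+1) n hn]
  | succ k ih =>
    rw [Finset.sum_range_succ, ih (by omega), W_step r n k hk]

/-- Second summation: `∑_{j=0}^k (k+1-j) W_r(n,j) = W_{r+2}(n,k)`. -/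
lemma W_sum2 (r n k : ℕ) (hk : k ≤ n) (hn : 1 ≤ n) :
    ∑ j ∈ Finset.range (k+1), ((k + 1 - j : ℕ) : ℚ) * W r n j = W (r+2) n k := by
  induction k with
  | zero => simp [W_zero r n hn, W_zero (r+2) n hn]
  | succ k ih =>
    have split : ∀ j ∈ Finset.range (k+1+1), ((k + 1 + 1 - j : ℕ) : ℚ) * W r n j
        = ((k + 1 - j : ℕ) : ℚ) * W r n j + W r n j := by
      intro j hj
      rw [Finset.mem_range] at hj
      rcases Nat.lt_or_ge j (k+1) with h | h
      · have : (k + 1 + 1 - j : ℕ) = (k + 1 - j) + 1 := by omega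
        rw [this]; push_cast; ring
      · have hj' : j = k + 1 := by omega
        subst hj'
        simp
    rw [Finset.sum_congr rfl split, Finset.sum_add_distrib,
      W_sum1 r n (k+1) hk hn]
    have last : ((k + 1 - (k+1) : ℕ) : ℚ) * W r n (k+1) = 0 := by simp
    rw [Finset.sum_range_succ, last, add_zero, ih (by omega),
      W_step (r+1) n k hk]

/-- Third summation: `∑_{j=0}^k C(k-j+2,2) W_r(n,j) = W_{r+3}(n,k)`. -/
lemma W_sum3 (r n k : ℕ) (hk : k ≤ n) (hn : 1 ≤ n) :
    ∑ j ∈ Finset.range (k+1), (((k - j + 2).choose 2 : ℕ) : ℚ) * W r n j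
      = W (r+3) n k := by
  induction k with
  | zero => simp [W_zero r n hn, W_zero (r+3) n hn]
  | succ k ih =>
    rw [Finset.sum_range_succ]
    have split : ∀ j ∈ Finset.range (k+1),
        (((k + 1 - j + 2).choose 2 : ℕ) : ℚ) * W r n j
        = (((k - j + 2).choose 2 : ℕ) : ℚ) * W r n j
          + ((k + 1 + 1 - j : ℕ) : ℚ) * W r n j := by
      intro j hj
      rw [Finset.mem_range] at hj
      have h1 : (k + 1 - j + 2 : ℕ) = (k - j + 2) + 1 := by omega
      have h2 : ((k - j + 2) + 1).choose 2 = (k - j + 2).choose 2 + (k - j + 2) := by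
        rw [Nat.choose_succ_succ]
        simp [Nat.choose_one_right]
        omega
      have h3 : (k + 1 + 1 - j : ℕ) = k - j + 2 := by omega
      rw [h1, h2, h3]; push_cast; ring
    rw [Finset.sum_congr rfl split, Finset.sum_add_distrib, ih (by omega)]
    have h2 : ∑ j ∈ Finset.range (k+1), ((k + 1 + 1 - j : ℕ) : ℚ) * W r n j
        + W r n (k+1) = W (r+2) n (k+1) := by
      have h := W_sum2 r n (k+1) hk hn
      rw [Finset.sum_range_succ] at h
      have : ((k + 1 + 1 - (k+1) : ℕ) : ℚ) = 1 := by norm_num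
      rw [this, one_mul] at h
      exact h
    have hcoef : (((k + 1 - (k+1) + 2).choose 2 : ℕ) : ℚ) = 1 := by norm_num
    rw [hcoef, one_mul, W_step (r+2) n k hk, add_assoc, h2]

lemma W_diag (n : ℕ) : W 0 n n = 0 := by
  unfold W
  have h : (3*(n:ℚ) - 3*n + (0:ℕ)) = 0 := by push_cast; ring
  rw [h, zero_div, zero_mul]

lemma W_shift (n k : ℕ) : W 3 n k = W 0 (n+1) k := by
  unfold W
  have h : 3*(n+1)+k+0 = 3*n+k+3 := by omega
  rw [h]
  push_cast
  ring

lemma F_eq : ∀ n, 1 ≤ n → ∀ k, k ≤ n → (F n k : ℚ) = W 0 n k := by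
  intro n
  induction n with
  | zero => omega
  | succ n ih =>
    intro _ k hk
    rcases Nat.eq_or_lt_of_le hk with hke | hklt
    · subst hke
      have : F (n+1) (n+1) = 0 := by simp [F]
      rw [this, W_diag]
      simp
    · have hkn : k ≤ n := by omega
      have hF : F (n+1) k = ∑ j ∈ Finset.range (k + 1), (k - j + 2).choose 2 * F n j := by
        simp only [F]
        rw [if_neg (by omega)]
      rw [hF]
      push_cast
      rcases Nat.eq_zero_or_pos n with hn0 | hn1
      · subst hn0
        interval_cases k
        rw [W_zero 0 1 le_rfl]
        norm_num [F]
      · have hsum : ∀ j ∈ Finset.range (k+1),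
            (((k - j + 2).choose 2 : ℕ) : ℚ) * (F n j : ℚ)
            = (((k - j + 2).choose 2 : ℕ) : ℚ) * W 0 n j := by
          intro j hj
          rw [Finset.mem_range] at hj
          rw [ih hn1 j (by omega)]
        rw [Finset.sum_congr rfl hsum, W_sum3 0 n k hkn hn1, W_shift]

theorem F_last_entry (n : ℕ) (hn : 0 < n) :
    (F n (n - 1) : ℚ) = fussCatalan 4 3 (n - 1) := by
  obtain ⟨m, rfl⟩ : ∃ m, n = m + 1 := ⟨n - 1, by omega⟩
  simp only [Nat.add_sub_cancel]
  rw [F_eq (m+1) (by omega) m (by omega)]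
  rcases Nat.eq_zero_or_pos m with hm | hm
  · subst hm
    rw [W_zero 0 1 le_rfl]
    simp [fussCatalan]
  · unfold fussCatalan W
    rw [if_neg (by omega)]
    have harg : 3*(m+1)+m+0 = 4*m+3 := by omega
    rw [harg]
    push_cast
    ring
end

section
/- Let D(n,k) denote the number of noncrossing arc diagrams with n arcs having exactly k blocks (arcs at the boundary of the unbounded region, i.e., outermost arcs). Then D(n,k) = T(n, n-k) for all 0 \le k \le n, where T is the Catalan triangle; in particular D(n,k) satisfies D(n,k) = \sum_{j=k-1}^{n-1} D(n-1,j) for n \ge 1, k \ge 1. -/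
/-- `D` is a noncrossing arc diagram with `n` arcs: a set of arcs `(i, j)` with `i < j < 2n`
such that every point `p < 2n` is an endpoint of exactly one arc, and no two arcs cross. -/
def IsArcDiagram (n : ℕ) (D : Finset (ℕ × ℕ)) : Prop :=
  (∀ a ∈ D, a.1 < a.2 ∧ a.2 < 2 * n) ∧
  (∀ p : ℕ, p < 2 * n → ∃! a, a ∈ D ∧ (p = a.1 ∨ p = a.2)) ∧
  (∀ a ∈ D, ∀ b ∈ D, ¬ (a.1 < b.1 ∧ b.1 < a.2 ∧ a.2 < b.2))

/-- The number of blocks of an arc diagram: the number of outermost arcs,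
i.e. arcs not contained in the interior of any other arc. -/
def numBlocks (D : Finset (ℕ × ℕ)) : ℕ :=
  (D.filter fun a => ∀ b ∈ D, ¬ (b.1 < a.1 ∧ a.2 < b.2)).card

/-- `arcCount n k`: the number of noncrossing arc diagrams with `n` arcs and `k` blocks. -/
noncomputable def arcCount (n k : ℕ) : ℕ :=
  Nat.card {D : Finset (ℕ × ℕ) // IsArcDiagram n D ∧ numBlocks D = k}

/-!
Erasing the arc `(s, 2n+1)` that ends at the last point of a diagram with `n + 1` arcs, and
closing up the gap at `s`, leaves a diagram `E` with `n` arcs in which no arc passes over the gap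
just left of `s`; call such an `s ≤ 2n` a cut of `E`. Conversely a new last arc can be started at
any cut. The cuts of `E` are the left ends of its blocks together with `2n`, and the blocks of the
enlarged diagram are the new arc and the blocks of `E` to the left of `s`. Hence the extension at
the `i`-th cut (counting from `0`) has `i + 1` blocks, and every `E` with at least `k` blocks has
exactly one extension with `k + 1` blocks. This gives the recursion, which turns into the
Catalan recurrence for `(n, k) ↦ arcCount n (n - k)`; that recurrence determines the triangle
on `k ≤ n`.
-/

open Finset

theorem Finset.existsUnique_card_filter_lt_eq {α : Type*} [LinearOrder α] {S : Finset α}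
    {m : ℕ} (hm : m < #S) : ∃! s, s ∈ S ∧ #{t ∈ S | t < s} = m := by
  set rank : α → ℕ := fun s => #{t ∈ S | t < s}
  have hmono : StrictMonoOn rank S := fun s₁ h₁ s₂ _ hlt =>
    card_lt_card <| (ssubset_iff_of_subset (monotone_filter_right _ fun _ _ ht => ht.trans hlt)).2
      ⟨s₁, mem_filter.2 ⟨h₁, hlt⟩, fun h => lt_irrefl _ (mem_filter.1 h).2⟩
  have hmaps : Set.MapsTo rank S (range #S) := fun s hs =>
    mem_range.2 (card_lt_card (filter_ssubset.2 ⟨s, hs, lt_irrefl s⟩))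
  obtain ⟨s, hs, rfl⟩ :=
    surjOn_of_injOn_of_card_le rank hmaps hmono.injOn (by simp) (mem_range.2 hm)
  exact ⟨s, ⟨hs, rfl⟩, fun t ⟨ht, hts⟩ => hmono.injOn ht hs hts⟩

namespace IsArcDiagram

variable {n : ℕ} {D : Finset (ℕ × ℕ)} {a b : ℕ × ℕ}

theorem bounds (h : IsArcDiagram n D) (ha : a ∈ D) : a.1 < a.2 ∧ a.2 < 2 * n := h.1 a ha

theorem eq_of_endpoint (h : IsArcDiagram n D) (ha : a ∈ D) (hb : b ∈ D) {p : ℕ}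
    (hpa : p = a.1 ∨ p = a.2) (hpb : p = b.1 ∨ p = b.2) : a = b := by
  have hp : p < 2 * n := by have := h.bounds ha; omega
  exact (h.2.1 p hp).unique ⟨ha, hpa⟩ ⟨hb, hpb⟩

theorem not_crossing (h : IsArcDiagram n D) (ha : a ∈ D) (hb : b ∈ D) :
    ¬ (a.1 < b.1 ∧ b.1 < a.2 ∧ a.2 < b.2) :=
  h.2.2 a ha b hb

end IsArcDiagram

namespace ArcDiagram

def succAbove (s x : ℕ) : ℕ := if x < s then x else x + 1

def predAbove (s x : ℕ) : ℕ := if x < s then x else x - 1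

theorem succAbove_cases (s x : ℕ) :
    x < s ∧ succAbove s x = x ∨ s ≤ x ∧ succAbove s x = x + 1 := by
  unfold succAbove; split_ifs <;> omega

theorem succAbove_strictMono (s : ℕ) : StrictMono (succAbove s) := fun x y _ => by
  have := succAbove_cases s x; have := succAbove_cases s y; omega

theorem succAbove_ne (s x : ℕ) : succAbove s x ≠ s := by
  have := succAbove_cases s x; omega

theorem predAbove_succAbove (s x : ℕ) : predAbove s (succAbove s x) = x := by
  have := succAbove_cases s x; unfold predAbove; split_ifs <;> omega

theorem succAbove_predAbove {s x : ℕ} (h : x ≠ s) : succAbove s (predAbove s x) = x := by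
  unfold succAbove predAbove; split_ifs <;> omega

def liftArc (s : ℕ) : ℕ × ℕ → ℕ × ℕ := Prod.map (succAbove s) (succAbove s)

@[simp] theorem liftArc_fst (s : ℕ) (c : ℕ × ℕ) : (liftArc s c).1 = succAbove s c.1 := rfl

@[simp] theorem liftArc_snd (s : ℕ) (c : ℕ × ℕ) : (liftArc s c).2 = succAbove s c.2 := rfl

theorem liftArc_injective (s : ℕ) : Function.Injective (liftArc s) :=
  (succAbove_strictMono s).injective.prodMap (succAbove_strictMono s).injective

theorem succAbove_eq_endpoint_iff {s q : ℕ} {c : ℕ × ℕ} :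
    (succAbove s q = (liftArc s c).1 ∨ succAbove s q = (liftArc s c).2) ↔
      (q = c.1 ∨ q = c.2) := by
  simp only [liftArc_fst, liftArc_snd, (succAbove_strictMono s).injective.eq_iff]

theorem isArcDiagram_zero_iff {D : Finset (ℕ × ℕ)} : IsArcDiagram 0 D ↔ D = ∅ := by
  refine ⟨fun h => eq_empty_iff_forall_notMem.2 fun a ha => ?_, ?_⟩
  · have := h.bounds ha; omega
  · rintro rfl; exact ⟨by simp, by simp, by simp⟩

def blocks (D : Finset (ℕ × ℕ)) : Finset (ℕ × ℕ) :=
  {a ∈ D | ∀ b ∈ D, ¬ (b.1 < a.1 ∧ a.2 < b.2)}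

theorem card_blocks (D : Finset (ℕ × ℕ)) : #(blocks D) = numBlocks D := rfl

def blocksBefore (E : Finset (ℕ × ℕ)) (s : ℕ) : Finset (ℕ × ℕ) :=
  {c ∈ blocks E | c.1 < s}

theorem card_blocksBefore_le (E : Finset (ℕ × ℕ)) (s : ℕ) :
    #(blocksBefore E s) ≤ numBlocks E :=
  card_filter_le _ _

def cuts (n : ℕ) (E : Finset (ℕ × ℕ)) : Finset ℕ :=
  {s ∈ range (2 * n + 1) | ∀ c ∈ E, ¬ (c.1 < s ∧ s ≤ c.2)}

theorem mem_cuts {n s : ℕ} {E : Finset (ℕ × ℕ)} :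
    s ∈ cuts n E ↔ s < 2 * n + 1 ∧ ∀ c ∈ E, ¬ (c.1 < s ∧ s ≤ c.2) := by
  rw [cuts, mem_filter, mem_range]

def insertLastArc (n s : ℕ) (E : Finset (ℕ × ℕ)) : Finset (ℕ × ℕ) :=
  insert (s, 2 * n + 1) (E.image (liftArc s))

def lastStart (n : ℕ) (D : Finset (ℕ × ℕ)) : ℕ := {a ∈ D | a.2 = 2 * n + 1}.sup Prod.fst

def eraseLastArc (n : ℕ) (D : Finset (ℕ × ℕ)) : Finset (ℕ × ℕ) :=
  (D.erase (lastStart n D, 2 * n + 1)).image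
    (Prod.map (predAbove (lastStart n D)) (predAbove (lastStart n D)))

section LastArc

variable {n s : ℕ} {D E : Finset (ℕ × ℕ)}

theorem isArcDiagram_insertLastArc (hE : IsArcDiagram n E) (hs : s ∈ cuts n E) :
    IsArcDiagram (n + 1) (insertLastArc n s E) := by
  obtain ⟨hs, hcut⟩ := mem_cuts.1 hs
  refine ⟨fun a ha => ?_, fun p hp => ?_, fun a ha b hb hcross => ?_⟩
  · rcases mem_insert.1 ha with rfl | ha
    · dsimp only; omega
    · obtain ⟨c, hc, rfl⟩ := mem_image.1 ha
      have := hE.bounds hc; have := succAbove_cases s c.1; have := succAbove_cases s c.2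
      simp only [liftArc_fst, liftArc_snd]; omega
  · by_cases hps : p = s ∨ p = 2 * n + 1
    · refine ⟨(s, 2 * n + 1), ⟨mem_insert_self _ _, hps⟩, fun b ⟨hb, hpb⟩ => ?_⟩
      rcases mem_insert.1 hb with rfl | hb
      · rfl
      obtain ⟨c, hc, rfl⟩ := mem_image.1 hb
      have := hE.bounds hc; have := succAbove_cases s c.1; have := succAbove_cases s c.2
      simp only [liftArc_fst, liftArc_snd] at hpb; omega
    obtain ⟨q, rfl⟩ : ∃ q, p = succAbove s q :=
      ⟨predAbove s p, (succAbove_predAbove (by omega)).symm⟩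
    have hq : q < 2 * n := by have := succAbove_cases s q; omega
    obtain ⟨c, ⟨hc, hqc⟩, hcu⟩ := hE.2.1 q hq
    refine ⟨liftArc s c, ⟨mem_insert_of_mem (mem_image_of_mem _ hc), ?_⟩,
      fun b ⟨hb, hpb⟩ => ?_⟩
    · exact succAbove_eq_endpoint_iff.2 hqc
    rcases mem_insert.1 hb with rfl | hb
    · have := succAbove_ne s q; have := succAbove_cases s q
      dsimp only at hpb; omega
    obtain ⟨c', hc', rfl⟩ := mem_image.1 hb
    rw [hcu c' ⟨hc', succAbove_eq_endpoint_iff.1 hpb⟩]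
  · rcases mem_insert.1 ha with rfl | ha <;> rcases mem_insert.1 hb with rfl | hb
    · dsimp only at hcross; omega
    · obtain ⟨c, hc, rfl⟩ := mem_image.1 hb
      have := hE.bounds hc; have := succAbove_cases s c.1; have := succAbove_cases s c.2
      simp only [liftArc_fst, liftArc_snd] at hcross; omega
    · obtain ⟨c, hc, rfl⟩ := mem_image.1 ha
      have := hcut c hc; have := succAbove_cases s c.1; have := succAbove_cases s c.2
      simp only [liftArc_fst, liftArc_snd] at hcross; omega
    · obtain ⟨c, hc, rfl⟩ := mem_image.1 ha
      obtain ⟨c', hc', rfl⟩ := mem_image.1 hb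
      simp only [liftArc_fst, liftArc_snd, (succAbove_strictMono s).lt_iff_lt] at hcross
      exact hE.not_crossing hc hc' hcross

theorem isArcDiagram_of_insertLastArc (h : IsArcDiagram (n + 1) (insertLastArc n s E)) :
    IsArcDiagram n E := by
  have hl : (s, 2 * n + 1) ∈ insertLastArc n s E := mem_insert_self _ _
  have hmem : ∀ c ∈ E, liftArc s c ∈ insertLastArc n s E :=
    fun c hc => mem_insert_of_mem (mem_image_of_mem _ hc)
  have hs := (h.bounds hl).1
  dsimp only at hs
  refine ⟨fun c hc => ?_, fun p hp => ?_, fun a ha b hb hcross => ?_⟩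
  · have hc' := h.bounds (hmem c hc)
    have hne : (liftArc s c).2 ≠ 2 * n + 1 := fun h2 =>
      succAbove_ne s c.1 (congrArg Prod.fst (h.eq_of_endpoint (hmem c hc) hl (Or.inr h2.symm)
        (Or.inr rfl)))
    have := succAbove_cases s c.1; have := succAbove_cases s c.2
    simp only [liftArc_fst, liftArc_snd] at hc' hne; omega
  · have := succAbove_cases s p
    obtain ⟨a, ⟨ha, hpa⟩, hau⟩ := h.2.1 (succAbove s p) (by omega)
    rcases mem_insert.1 ha with rfl | ha
    · have := succAbove_ne s p; have := succAbove_cases s p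
      dsimp only at hpa; omega
    obtain ⟨c, hc, rfl⟩ := mem_image.1 ha
    refine ⟨c, ⟨hc, ?_⟩, fun c' ⟨hc', hpc'⟩ => ?_⟩
    · exact succAbove_eq_endpoint_iff.1 hpa
    · exact liftArc_injective s (hau _ ⟨hmem c' hc', succAbove_eq_endpoint_iff.2 hpc'⟩)
  · refine h.not_crossing (hmem a ha) (hmem b hb) ?_
    simpa only [liftArc_fst, liftArc_snd, (succAbove_strictMono s).lt_iff_lt] using hcross

theorem mem_cuts_of_insertLastArc (h : IsArcDiagram (n + 1) (insertLastArc n s E)) :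
    s ∈ cuts n E := by
  have hl : (s, 2 * n + 1) ∈ insertLastArc n s E := mem_insert_self _ _
  have hs := (h.bounds hl).1
  dsimp only at hs
  refine mem_cuts.2 ⟨hs, fun c hc hspan =>
    h.not_crossing (mem_insert_of_mem (mem_image_of_mem _ hc)) hl ?_⟩
  have := (isArcDiagram_of_insertLastArc h).bounds hc
  have := succAbove_cases s c.1; have := succAbove_cases s c.2
  simp only [liftArc_fst, liftArc_snd]; omega

theorem lastStart_eq (h : IsArcDiagram (n + 1) D) (hs : (s, 2 * n + 1) ∈ D) :
    lastStart n D = s := by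
  have : {a ∈ D | a.2 = 2 * n + 1} = {(s, 2 * n + 1)} := by
    ext a
    simp only [mem_filter, mem_singleton]
    refine ⟨fun ⟨ha, ha2⟩ => h.eq_of_endpoint ha hs (Or.inr ha2.symm) (Or.inr rfl), ?_⟩
    rintro rfl
    exact ⟨hs, rfl⟩
  rw [lastStart, this, sup_singleton]

theorem lastStart_mem (h : IsArcDiagram (n + 1) D) : (lastStart n D, 2 * n + 1) ∈ D := by
  obtain ⟨a, ⟨ha, hpa⟩, -⟩ := h.2.1 (2 * n + 1) (by omega)
  have := h.bounds ha
  have hl : (a.1, 2 * n + 1) ∈ D := by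
    rwa [show (a.1, 2 * n + 1) = a from Prod.ext rfl (by dsimp only; omega)]
  rwa [lastStart_eq h hl]

theorem insertLastArc_eraseLastArc (h : IsArcDiagram (n + 1) D) :
    insertLastArc n (lastStart n D) (eraseLastArc n D) = D := by
  set s := lastStart n D
  have hl : (s, 2 * n + 1) ∈ D := lastStart_mem h
  have hid : Set.EqOn (liftArc s ∘ Prod.map (predAbove s) (predAbove s))
      id (D.erase (s, 2 * n + 1)) := by
    intro a ha
    obtain ⟨hne, ha⟩ := mem_erase.1 ha
    have h1 : a.1 ≠ s := fun h1 => hne (h.eq_of_endpoint ha hl (Or.inl h1.symm) (Or.inl rfl))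
    have h2 : a.2 ≠ s := fun h2 => hne (h.eq_of_endpoint ha hl (Or.inr h2.symm) (Or.inl rfl))
    exact Prod.ext (succAbove_predAbove h1) (succAbove_predAbove h2)
  rw [insertLastArc, eraseLastArc, image_image, image_congr hid, image_id, insert_erase hl]

theorem eraseLastArc_insertLastArc (hE : IsArcDiagram n E) (hs : s ∈ cuts n E) :
    eraseLastArc n (insertLastArc n s E) = E := by
  have hl : (s, 2 * n + 1) ∉ E.image (liftArc s) := fun hmem => by
    obtain ⟨c, -, hc⟩ := mem_image.1 hmem
    exact succAbove_ne s c.1 (congrArg Prod.fst hc)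
  rw [eraseLastArc, lastStart_eq (isArcDiagram_insertLastArc hE hs) (mem_insert_self _ _),
    insertLastArc, erase_insert hl, image_image, liftArc, Prod.map_comp_map,
    show predAbove s ∘ succAbove s = id from funext (predAbove_succAbove s), Prod.map_id,
    image_id]

theorem isArcDiagram_eraseLastArc (h : IsArcDiagram (n + 1) D) :
    IsArcDiagram n (eraseLastArc n D) := by
  rw [← insertLastArc_eraseLastArc h] at h
  exact isArcDiagram_of_insertLastArc h

theorem lastStart_mem_cuts (h : IsArcDiagram (n + 1) D) :
    lastStart n D ∈ cuts n (eraseLastArc n D) := by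
  rw [← insertLastArc_eraseLastArc h] at h
  exact mem_cuts_of_insertLastArc h

theorem blocks_insertLastArc (hE : IsArcDiagram n E) :
    blocks (insertLastArc n s E) =
      insert (s, 2 * n + 1) ((blocksBefore E s).image (liftArc s)) := by
  have hlt : ∀ c ∈ E, succAbove s c.2 < 2 * n + 1 := fun c hc => by
    have := hE.bounds hc; have := succAbove_cases s c.2; omega
  rw [blocks, insertLastArc, filter_insert, if_pos, filter_image, blocksBefore, blocks,
    filter_filter]
  · congr 2
    refine filter_congr fun c hc => ?_
    simp only [forall_mem_insert, forall_mem_image, liftArc_fst, liftArc_snd,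
      (succAbove_strictMono s).lt_iff_lt]
    have := hlt c hc; have := succAbove_cases s c.1
    constructor
    · rintro ⟨h1, h2⟩; exact ⟨h2, by omega⟩
    · rintro ⟨h2, h1⟩; exact ⟨by omega, h2⟩
  · simp only [forall_mem_insert, forall_mem_image, liftArc_fst, liftArc_snd]
    exact ⟨by omega, fun c hc => by have := hlt c hc; omega⟩

theorem numBlocks_insertLastArc (hE : IsArcDiagram n E) :
    numBlocks (insertLastArc n s E) = #(blocksBefore E s) + 1 := by
  have hl : (s, 2 * n + 1) ∉ (blocksBefore E s).image (liftArc s) :=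
    fun hmem => by
      obtain ⟨c, -, hc⟩ := mem_image.1 hmem
      exact succAbove_ne s c.1 (congrArg Prod.fst hc)
  rw [← card_blocks, blocks_insertLastArc hE, card_insert_of_notMem hl,
    card_image_of_injective _ (liftArc_injective s)]

theorem numBlocks_eq_card_blocksBefore (h : IsArcDiagram (n + 1) D) :
    numBlocks D = #(blocksBefore (eraseLastArc n D) (lastStart n D)) + 1 := by
  conv_lhs => rw [← insertLastArc_eraseLastArc h]
  exact numBlocks_insertLastArc (isArcDiagram_eraseLastArc h)

theorem numBlocks_le (h : IsArcDiagram n D) : numBlocks D ≤ n := by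
  induction n generalizing D with
  | zero => simp [isArcDiagram_zero_iff.1 h, numBlocks]
  | succ n ih =>
    have := ih (isArcDiagram_eraseLastArc h)
    have := card_blocksBefore_le (eraseLastArc n D) (lastStart n D)
    rw [numBlocks_eq_card_blocksBefore h]
    omega

theorem cuts_eq (hE : IsArcDiagram n E) :
    cuts n E = insert (2 * n) ((blocks E).image Prod.fst) := by
  ext s
  simp only [mem_cuts, mem_insert, mem_image]
  constructor
  · rintro ⟨hs, hcut⟩
    rcases (show s = 2 * n ∨ s < 2 * n by omega) with rfl | hs
    · exact Or.inl rfl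
    obtain ⟨c, ⟨hc, hsc⟩, -⟩ := hE.2.1 s hs
    have := hcut c hc; have := hE.bounds hc
    exact Or.inr ⟨c, mem_filter.2 ⟨hc, fun b hb hcov => hcut b hb ⟨by omega, by omega⟩⟩,
      by omega⟩
  · rintro (rfl | ⟨c, hc, rfl⟩)
    · exact ⟨by omega, fun c hc => by have := hE.bounds hc; omega⟩
    obtain ⟨hcE, hblock⟩ := mem_filter.1 hc
    have := hE.bounds hcE
    refine ⟨by omega, fun b hb hspan => ?_⟩
    have hne : b ≠ c := by rintro rfl; omega
    have h1 : b.2 ≠ c.1 := fun h => hne (hE.eq_of_endpoint hb hcE (Or.inr h.symm) (Or.inl rfl))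
    have h2 : b.2 ≠ c.2 := fun h => hne (hE.eq_of_endpoint hb hcE (Or.inr h.symm) (Or.inr rfl))
    have := hE.not_crossing hb hcE
    exact hblock b hb ⟨hspan.1, by omega⟩

theorem existsUnique_mem_cuts (hE : IsArcDiagram n E) {m : ℕ} (hm : m ≤ numBlocks E) :
    ∃! s, s ∈ cuts n E ∧ #(blocksBefore E s) = m := by
  have hinj : Set.InjOn Prod.fst (blocks E : Set (ℕ × ℕ)) := fun c hc d hd hcd =>
    hE.eq_of_endpoint (mem_filter.1 hc).1 (mem_filter.1 hd).1 (Or.inl rfl) (Or.inl hcd)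
  have hnot : 2 * n ∉ (blocks E).image Prod.fst := fun hmem => by
    obtain ⟨c, hc, hc1⟩ := mem_image.1 hmem
    have := hE.bounds (mem_filter.1 hc).1; omega
  have hcard : #(cuts n E) = numBlocks E + 1 := by
    rw [cuts_eq hE, card_insert_of_notMem hnot, card_image_of_injOn hinj, card_blocks]
  have hrank : ∀ s ∈ cuts n E, #(blocksBefore E s) = #{t ∈ cuts n E | t < s} := by
    intro s hs
    have := (mem_cuts.1 hs).1
    rw [cuts_eq hE, filter_insert, if_neg (by omega), filter_image,
      card_image_of_injOn (hinj.mono (filter_subset _ _)), blocksBefore]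
  obtain ⟨s, ⟨hs, hsm⟩, huniq⟩ :=
    existsUnique_card_filter_lt_eq (S := cuts n E) (by omega : m < _)
  exact ⟨s, ⟨hs, (hrank s hs).trans hsm⟩,
    fun t ⟨ht, htm⟩ => huniq t ⟨ht, (hrank t ht).symm.trans htm⟩⟩

theorem eq_of_eraseLastArc_eq {D₁ D₂ : Finset (ℕ × ℕ)} (h₁ : IsArcDiagram (n + 1) D₁)
    (h₂ : IsArcDiagram (n + 1) D₂) (hE : eraseLastArc n D₁ = eraseLastArc n D₂)
    (hk : numBlocks D₁ = numBlocks D₂) : D₁ = D₂ := by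
  rw [numBlocks_eq_card_blocksBefore h₁, numBlocks_eq_card_blocksBefore h₂, hE,
    Nat.add_right_cancel_iff] at hk
  have hs₁ := lastStart_mem_cuts h₁
  rw [hE] at hs₁
  have hs : lastStart n D₁ = lastStart n D₂ :=
    (existsUnique_mem_cuts (isArcDiagram_eraseLastArc h₂) (card_blocksBefore_le _ _)).unique
      ⟨hs₁, hk⟩ ⟨lastStart_mem_cuts h₂, rfl⟩
  rw [← insertLastArc_eraseLastArc h₁, ← insertLastArc_eraseLastArc h₂, hE, hs]

theorem exists_eraseLastArc_eq (hE : IsArcDiagram n E) {k : ℕ} (hk : k ≤ numBlocks E) :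
    ∃ D, IsArcDiagram (n + 1) D ∧ numBlocks D = k + 1 ∧ eraseLastArc n D = E := by
  obtain ⟨s, ⟨hs, hsk⟩, -⟩ := existsUnique_mem_cuts hE hk
  exact ⟨insertLastArc n s E, isArcDiagram_insertLastArc hE hs,
    by rw [numBlocks_insertLastArc hE, hsk], eraseLastArc_insertLastArc hE hs⟩

end LastArc

noncomputable def diagrams (n : ℕ) : Finset (Finset (ℕ × ℕ)) := by
  classical exact {D ∈ (range (2 * n) ×ˢ range (2 * n)).powerset | IsArcDiagram n D}

theorem mem_diagrams {n : ℕ} {D : Finset (ℕ × ℕ)} :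
    D ∈ diagrams n ↔ IsArcDiagram n D := by
  classical
  rw [diagrams, mem_filter, mem_powerset]
  refine ⟨And.right, fun h => ⟨fun a ha => ?_, h⟩⟩
  have := h.bounds ha
  rw [mem_product, mem_range, mem_range]
  omega

theorem arcCount_eq_card (n k : ℕ) : arcCount n k = #{D ∈ diagrams n | numBlocks D = k} := by
  rw [arcCount, ← Nat.card_eq_finsetCard]
  exact Nat.card_congr (Equiv.subtypeEquivRight fun D => by rw [mem_filter, mem_diagrams])

theorem arcCount_zero_zero : arcCount 0 0 = 1 := by
  rw [arcCount_eq_card, card_eq_one]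
  refine ⟨∅, eq_singleton_iff_unique_mem.2 ⟨?_, fun D hD => ?_⟩⟩
  · exact mem_filter.2 ⟨mem_diagrams.2 (isArcDiagram_zero_iff.2 rfl), rfl⟩
  · exact isArcDiagram_zero_iff.1 (mem_diagrams.1 (mem_filter.1 hD).1)

theorem arcCount_succ_zero (n : ℕ) : arcCount (n + 1) 0 = 0 := by
  rw [arcCount_eq_card, card_eq_zero, filter_eq_empty_iff]
  intro D hD
  rw [numBlocks_eq_card_blocksBefore (mem_diagrams.1 hD)]
  exact Nat.succ_ne_zero _

theorem arcCount_succ_succ (n k : ℕ) :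
    arcCount (n + 1) (k + 1) = ∑ j ∈ Icc k n, arcCount n j := by
  have hbij : #{D ∈ diagrams (n + 1) | numBlocks D = k + 1} =
      #{E ∈ diagrams n | k ≤ numBlocks E} := by
    refine card_bij (fun D _ => eraseLastArc n D) (fun D hD => ?_)
      (fun D₁ h₁ D₂ h₂ hE => ?_) (fun E hE => ?_)
    · obtain ⟨hD, hk⟩ := mem_filter.1 hD
      have h := mem_diagrams.1 hD
      have := numBlocks_eq_card_blocksBefore h
      have := card_blocksBefore_le (eraseLastArc n D) (lastStart n D)
      exact mem_filter.2 ⟨mem_diagrams.2 (isArcDiagram_eraseLastArc h), by omega⟩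
    · obtain ⟨h₁, hk₁⟩ := mem_filter.1 h₁
      obtain ⟨h₂, hk₂⟩ := mem_filter.1 h₂
      exact eq_of_eraseLastArc_eq (mem_diagrams.1 h₁) (mem_diagrams.1 h₂) hE
        (hk₁.trans hk₂.symm)
    · obtain ⟨hE, hk⟩ := mem_filter.1 hE
      obtain ⟨D, hD, hDk, rfl⟩ := exists_eraseLastArc_eq (mem_diagrams.1 hE) hk
      exact ⟨D, mem_filter.2 ⟨mem_diagrams.2 hD, hDk⟩, rfl⟩
  rw [arcCount_eq_card, hbij, card_eq_sum_card_fiberwise (f := numBlocks) (t := Icc k n)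
    fun E hE => mem_Icc.2 ⟨(mem_filter.1 hE).2,
      numBlocks_le (mem_diagrams.1 (mem_filter.1 hE).1)⟩]
  refine sum_congr rfl fun j hj => ?_
  rw [arcCount_eq_card, filter_filter]
  refine congrArg card (filter_congr fun E _ => ?_)
  exact ⟨And.right, fun hE => ⟨hE ▸ (mem_Icc.1 hj).1, hE⟩⟩

theorem arcCount_self (n : ℕ) : arcCount n n = 1 := by
  induction n with
  | zero => exact arcCount_zero_zero
  | succ n ih => rw [arcCount_succ_succ, Icc_self, sum_singleton, ih]

theorem arcCount_succ_succ_eq_add {n k : ℕ} (hk : k < n) :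
    arcCount (n + 1) (k + 1) = arcCount n k + arcCount (n + 1) (k + 2) := by
  rw [arcCount_succ_succ, arcCount_succ_succ, ← insert_Icc_add_one_left_eq_Icc hk.le,
    sum_insert (by simp)]

end ArcDiagram

structure IsCatalanTriangle (T : ℕ → ℕ → ℕ) : Prop where
  zero_zero : T 0 0 = 1
  pos_zero : ∀ n, 0 < n → T n 0 = 1
  pos_self : ∀ n, 0 < n → T n n = 0
  step : ∀ n k, 1 < n → 0 < k → k < n → T n k = T n (k - 1) + T (n - 1) k

theorem IsCatalanTriangle.eq_of_le {T T' : ℕ → ℕ → ℕ} (hT : IsCatalanTriangle T)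
    (hT' : IsCatalanTriangle T') {n k : ℕ} (hk : k ≤ n) : T n k = T' n k := by
  induction n generalizing k with
  | zero => rw [Nat.le_zero.1 hk, hT.zero_zero, hT'.zero_zero]
  | succ n ihn =>
    induction k with
    | zero => rw [hT.pos_zero _ n.succ_pos, hT'.pos_zero _ n.succ_pos]
    | succ k ihk =>
      rcases hk.eq_or_lt with heq | hlt
      · obtain rfl : k = n := by omega
        rw [hT.pos_self _ k.succ_pos, hT'.pos_self _ k.succ_pos]
      · rw [hT.step _ _ (by omega) (by omega) hlt, hT'.step _ _ (by omega) (by omega) hlt,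
          Nat.add_sub_cancel, Nat.add_sub_cancel, ihk (by omega), ihn (by omega)]

open ArcDiagram in
theorem isCatalanTriangle_arcCount : IsCatalanTriangle fun n k => arcCount n (n - k) where
  zero_zero := arcCount_zero_zero
  pos_zero n _ := arcCount_self n
  pos_self n hn := by
    obtain ⟨n, rfl⟩ := Nat.exists_eq_add_of_le' hn
    simpa using arcCount_succ_zero n
  step n k hn hk hkn := by
    obtain ⟨m, rfl⟩ := Nat.exists_eq_add_of_le' hn.le
    rw [show m + 1 - k = (m - k) + 1 by omega, show m + 1 - (k - 1) = (m - k) + 2 by omega,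
      Nat.add_sub_cancel, arcCount_succ_succ_eq_add (by omega), add_comm]

theorem arcCount_eq_catalan_triangle
    (T : ℕ → ℕ → ℕ)
    (hT00 : T 0 0 = 1)
    (hT0 : ∀ n : ℕ, 0 < n → T n 0 = 1)
    (hTnn : ∀ n : ℕ, 0 < n → T n n = 0)
    (hrec : ∀ n k : ℕ, 1 < n → 0 < k → k < n → T n k = T n (k - 1) + T (n - 1) k) :
    ∀ n k : ℕ,
      (k ≤ n → arcCount n k = T n (n - k)) ∧
      (1 ≤ n → 1 ≤ k →
        arcCount n k = ∑ j ∈ Finset.Icc (k - 1) (n - 1), arcCount (n - 1) j) := by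
  have hT : IsCatalanTriangle T := ⟨hT00, hT0, hTnn, hrec⟩
  intro n k
  refine ⟨fun hk => ?_, fun hn hk => ?_⟩
  · have := isCatalanTriangle_arcCount.eq_of_le hT (Nat.sub_le n k)
    rwa [Nat.sub_sub_self hk] at this
  · obtain ⟨n, rfl⟩ := Nat.exists_eq_add_of_le' hn
    obtain ⟨k, rfl⟩ := Nat.exists_eq_add_of_le' hk
    simpa using ArcDiagram.arcCount_succ_succ n k
end

section
/- For every n > 0, \sum_{k=1}^{n} T(n, n-k) \cdot 2^{k-1} = \binom{2n-1}{n}, where T is the Catalan triangle. (This counts tb-diagrams: noncrossing arc diagrams with n arcs and k outermost arcs, each of the k-1 adjacent pairs of outermost arcs optionally joined by a tie.) -/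
theorem catalan_triangle_tb_diagram_count
    (T : ℕ → ℕ → ℕ)
    (hT00 : T 0 0 = 1)
    (hT0 : ∀ n : ℕ, 0 < n → T n 0 = 1)
    (hTnn : ∀ n : ℕ, 0 < n → T n n = 0)
    (hrec : ∀ n k : ℕ, 1 < n → 0 < k → k < n → T n k = T n (k - 1) + T (n - 1) k) :
    ∀ n : ℕ, 0 < n →
      ∑ k ∈ Finset.Icc 1 n, T n (n - k) * 2 ^ (k - 1) = (2 * n - 1).choose n := by
  -- Closed form for the triangle, stated additively to avoid ℕ-subtraction.
  have key : ∀ n k : ℕ, k + 1 ≤ n →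
      T n (k + 1) + (n + k).choose k = (n + k).choose (k + 1) := by
    intro n
    induction n with
    | zero => intro k hk; omega
    | succ n ih =>
      intro k
      induction k with
      | zero =>
        intro _
        show T (n + 1) 1 + (n + 1).choose 0 = (n + 1).choose 1
        rcases Nat.eq_zero_or_pos n with rfl | hn
        · simp [hTnn 1 one_pos]
        · have hr := hrec (n + 1) 1 (by omega) (by omega) (by omega)
          simp only [show (1:ℕ) - 1 = 0 from rfl, show n + 1 - 1 = n from rfl] at hr
          have h0 : T (n + 1) 0 = 1 := hT0 _ (by omega)
          have h1 : T n 1 + n.choose 0 = n.choose 1 := ih 0 hn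
          simp only [Nat.choose_zero_right, Nat.choose_one_right] at h1 ⊢
          omega
      | succ k ihk =>
        intro hk
        show T (n + 1) (k + 2) + (n + 1 + (k + 1)).choose (k + 1)
            = (n + 1 + (k + 1)).choose (k + 2)
        rw [show n + 1 + (k + 1) = n + k + 2 by ring]
        rcases eq_or_lt_of_le hk with heq | hlt
        · have hn2 : n = k + 1 := by omega
          subst hn2
          have h0 : T (k + 2) (k + 2) = 0 := hTnn _ (by omega)
          have hs : (2 * k + 3).choose (k + 1) = (2 * k + 3).choose (k + 2) := by
            have h := Nat.choose_symm (n := 2 * k + 3) (k := k + 2) (by omega)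
            rw [show 2 * k + 3 - (k + 2) = k + 1 by omega] at h
            exact h
          rw [show k + 1 + 1 = k + 2 by omega, show k + 1 + k + 2 = 2 * k + 3 by ring]
          omega
        · have hr := hrec (n + 1) (k + 2) (by omega) (by omega) (by omega)
          simp only [show k + 2 - 1 = k + 1 from rfl, show n + 1 - 1 = n from rfl] at hr
          have h1 : T (n + 1) (k + 1) + (n + k + 1).choose k = (n + k + 1).choose (k + 1) := by
            have := ihk (by omega)
            rw [show n + 1 + k = n + k + 1 by ring] at this
            exact this
          have h2 : T n (k + 2) + (n + k + 1).choose (k + 1) = (n + k + 1).choose (k + 2) := by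
            have := ih (k + 1) (by omega)
            rw [show n + (k + 1) = n + k + 1 by ring] at this
            exact this
          have p1 : (n + k + 2).choose (k + 1)
              = (n + k + 1).choose k + (n + k + 1).choose (k + 1) :=
            Nat.choose_succ_succ _ _
          have p2 : (n + k + 2).choose (k + 2)
              = (n + k + 1).choose (k + 1) + (n + k + 1).choose (k + 2) :=
            Nat.choose_succ_succ _ _
          omega
  intro n hn
  obtain ⟨m, rfl⟩ : ∃ m, n = m + 1 := ⟨n - 1, by omega⟩
  clear hn
  -- convert the Icc sum to a range sum
  have hconv : ∀ N : ℕ, ∑ k ∈ Finset.Icc 1 (N + 1), T (N + 1) (N + 1 - k) * 2 ^ (k - 1)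
      = ∑ j ∈ Finset.range (N + 1), T (N + 1) (N - j) * 2 ^ j := by
    intro N
    rw [← Finset.Ico_add_one_right_eq_Icc, Finset.sum_Ico_eq_sum_range]
    apply Finset.sum_congr (by norm_num)
    intro j hj
    rw [show N + 1 - (1 + j) = N - j by omega, show 1 + j - 1 = j by omega]
  rw [hconv]
  induction m with
  | zero => simp [hT0 1 one_pos]
  | succ m ih =>
    rw [show 2 * (m + 1) - 1 = 2 * m + 1 by omega] at ih
    set Sn := ∑ j ∈ Finset.range (m + 1), T (m + 1) (m - j) * 2 ^ j with hSn
    set S := ∑ j ∈ Finset.range (m + 1 + 1), T (m + 1 + 1) (m + 1 - j) * 2 ^ j with hS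
    set A := ∑ j ∈ Finset.range (m + 1), T (m + 2) (m - j) * 2 ^ j with hA
    set B := ∑ j ∈ Finset.range (m + 1), T (m + 1) (m + 1 - j) * 2 ^ j with hB
    have hT0' : T (m + 2) 0 = 1 := hT0 _ (by omega)
    have e1 : S = A + B + 2 ^ (m + 1) := by
      rw [hS, Finset.sum_range_succ, show m + 1 - (m + 1) = 0 by omega,
        show m + 1 + 1 = m + 2 from rfl, hT0', one_mul]
      congr 1
      rw [hA, hB, ← Finset.sum_add_distrib]
      apply Finset.sum_congr rfl
      intro j hj
      rw [Finset.mem_range] at hj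
      have hrj := hrec (m + 2) (m + 1 - j) (by omega) (by omega) (by omega)
      rw [show m + 1 - j - 1 = m - j by omega, show m + 2 - 1 = m + 1 from rfl] at hrj
      rw [hrj, add_mul]
    have e2 : S = 2 * A + T (m + 2) (m + 1) := by
      rw [hS, Finset.sum_range_succ', show m + 1 - 0 = m + 1 from rfl, pow_zero, mul_one,
        show m + 1 + 1 = m + 2 from rfl]
      congr 1
      rw [hA, Finset.mul_sum]
      apply Finset.sum_congr rfl
      intro j hj
      rw [show m + 1 - (j + 1) = m - j by omega]
      ring
    have e3 : B + 2 ^ (m + 1) = 2 * Sn := by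
      have hB2 : B = ∑ j ∈ Finset.range m, T (m + 1) (m - j) * 2 ^ (j + 1) := by
        rw [hB, Finset.sum_range_succ', show m + 1 - 0 = m + 1 from rfl, pow_zero, mul_one,
          hTnn (m + 1) (by omega), add_zero]
        apply Finset.sum_congr rfl
        intro j hj
        rw [show m + 1 - (j + 1) = m - j by omega]
      have h2Sn : 2 * Sn = ∑ j ∈ Finset.range (m + 1), T (m + 1) (m - j) * 2 ^ (j + 1) := by
        rw [hSn, Finset.mul_sum]
        apply Finset.sum_congr rfl
        intro j hj
        ring
      rw [hB2, h2Sn, Finset.sum_range_succ, show m - m = 0 by omega,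
        hT0 (m + 1) (by omega), one_mul]
    have k1 := key (m + 2) m (by omega)
    rw [show m + 2 + m = 2 * m + 2 by ring, show m + 1 + 1 = m + 2 from rfl] at k1
    -- k1 : T (m+2) (m+1) + (2m+2).choose m = (2m+2).choose (m+1)
    have ps : (2 * m + 1).choose m = (2 * m + 1).choose (m + 1) := by
      have h := Nat.choose_symm (n := 2 * m + 1) (k := m + 1) (by omega)
      rw [show 2 * m + 1 - (m + 1) = m by omega] at h
      exact h
    have p1 : (2 * m + 3).choose (m + 2)
        = (2 * m + 2).choose (m + 1) + (2 * m + 2).choose (m + 2) :=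
      Nat.choose_succ_succ _ _
    have p2 : (2 * m + 2).choose (m + 1)
        = (2 * m + 1).choose m + (2 * m + 1).choose (m + 1) :=
      Nat.choose_succ_succ _ _
    have p3 : (2 * m + 2).choose m = (2 * m + 2).choose (m + 2) := by
      have h := Nat.choose_symm (n := 2 * m + 2) (k := m + 2) (by omega)
      rw [show 2 * m + 2 - (m + 2) = m by omega] at h
      exact h
    have hgoal : (2 * (m + 1 + 1) - 1).choose (m + 1 + 1) = (2 * m + 3).choose (m + 2) := by
      congr 1 <;> omega
    rw [hgoal]
    omega
end
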